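/- arXiv:1309.2005 — 3 statements merged into one kernel-verified Lean document; each statement's English description precedes it below -/
import Mathlib

section
/- Under the Hermitian hypotheses, every tangent hyperplane contains exactly A₁ = q^{2n−2} codimension-2 subspaces meeting K in C₁ points, exactly A₂ = q^{n−2}(q^{n−1}+(−1)^n)/(q+1) codimension-2 subspaces meeting K in C₂ points, and exactly A₃ = (q^{n−1}+(−1)^n)(q^{n−2}−(−1)^n)/(q²−1) codimension-2 subspaces meeting K in C₃ points. -/
set_option maxHeartbeats 1600000

open Module Submodule Set



lemma fiber_count {α β : Type*} [Finite α] {s : Set α} {t : Set β} (ht : t.Finite)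
    (f : α → β) (hmap : ∀ a ∈ s, f a ∈ t) (k : ℕ)
    (hfib : ∀ b ∈ t, {a ∈ s | f a = b}.ncard = k) :
    s.ncard = k * t.ncard := by
  classical
  have hs : s.Finite := Set.toFinite s
  have h1 : ∀ x ∈ hs.toFinset, f x ∈ ht.toFinset := by
    intro x hx
    rw [Set.Finite.mem_toFinset] at hx ⊢
    exact hmap x hx
  have h2 := Finset.card_eq_sum_card_fiberwise h1
  have h3 : ∀ b ∈ ht.toFinset, (hs.toFinset.filter (fun a => f a = b)).card = k := by
    intro b hb
    rw [Set.Finite.mem_toFinset] at hb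
    rw [← hfib b hb]
    have : {a ∈ s | f a = b} = ↑(hs.toFinset.filter (fun a => f a = b)) := by
      ext a; simp [Set.Finite.mem_toFinset]
    rw [this, Set.ncard_coe_finset]
  rw [Finset.sum_congr rfl h3, Finset.sum_const, smul_eq_mul] at h2
  rw [Set.ncard_eq_toFinset_card _ hs, Set.ncard_eq_toFinset_card _ ht, h2, mul_comm]

lemma ker_scal {F M : Type*} [Field F] [AddCommGroup M] [Module F M] {φ ψ : M →ₗ[F] F}
    (hφ : φ ≠ 0) (h : LinearMap.ker ψ = LinearMap.ker φ) : ∃ c : F, c ≠ 0 ∧ ψ = c • φ := by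
  obtain ⟨v, hv⟩ : ∃ v, φ v ≠ 0 := by
    by_contra hc; push_neg at hc
    exact hφ (LinearMap.ext fun x => by simp [hc x])
  have hvψ : ψ v ≠ 0 := by
    intro h0
    have : v ∈ LinearMap.ker φ := h ▸ LinearMap.mem_ker.2 h0
    exact hv (LinearMap.mem_ker.1 this)
  refine ⟨ψ v / φ v, div_ne_zero hvψ hv, ?_⟩
  ext x
  have hy : φ (x - (φ x / φ v) • v) = 0 := by
    rw [map_sub, map_smul, smul_eq_mul, div_mul_cancel₀ _ hv, sub_self]
  have hy' : ψ (x - (φ x / φ v) • v) = 0 := by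
    have : x - (φ x / φ v) • v ∈ LinearMap.ker ψ := h ▸ LinearMap.mem_ker.2 hy
    exact LinearMap.mem_ker.1 this
  rw [map_sub, map_smul, sub_eq_zero] at hy'
  rw [LinearMap.smul_apply, smul_eq_mul, hy']
  rw [smul_eq_mul]; ring

lemma exists_ker_eq {F M : Type*} [Field F] [AddCommGroup M] [Module F M]
    [FiniteDimensional F M] {S : Submodule F M} {d : ℕ}
    (hd : finrank F M = d) (hS : finrank F S = d - 1) (h1 : 1 ≤ d) :
    ∃ φ : M →ₗ[F] F, φ ≠ 0 ∧ LinearMap.ker φ = S := by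
  have hq : finrank F (M ⧸ S) = 1 := by
    have := Submodule.finrank_quotient_add_finrank S
    omega
  obtain ⟨e⟩ := FiniteDimensional.nonempty_linearEquiv_of_finrank_eq
    (by rw [hq, Module.finrank_self] : finrank F (M ⧸ S) = finrank F F)
  refine ⟨e.toLinearMap ∘ₗ S.mkQ, ?_, ?_⟩
  · intro h0
    have hker : LinearMap.ker (e.toLinearMap ∘ₗ S.mkQ) = S := by
      rw [LinearMap.ker_comp, LinearEquiv.ker, Submodule.comap_bot, Submodule.ker_mkQ]
    rw [h0, LinearMap.ker_zero] at hker
    have : finrank F (⊤ : Submodule F M) = d - 1 := by rw [hker]; exact hS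
    rw [finrank_top, hd] at this
    omega
  · rw [LinearMap.ker_comp, LinearEquiv.ker, Submodule.comap_bot, Submodule.ker_mkQ]

lemma count_hyperplanes {F V : Type*} [Field F] [Fintype F] [AddCommGroup V] [Module F V]
    [Finite V] (W U : Submodule F V) (hUW : U ≤ W) (d k : ℕ)
    (hW : finrank F W = d) (hU : finrank F U = k) (hkd : k < d) :
    Fintype.card F ^ (d - k) - 1 = (Fintype.card F - 1) *
      {S : Submodule F V | S ≤ W ∧ finrank F S = d - 1 ∧ U ≤ S}.ncard := by
  classical
  haveI : Module.Finite F V := Module.finite_iff_finite.mpr ‹_›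
  haveI : FiniteDimensional F ↥W := inferInstance
  haveI : Finite (Submodule F V) :=
    Finite.of_injective (fun S => (S : Set V)) SetLike.coe_injective
  haveI : Finite (Module.Dual F ↥W) :=
    Finite.of_injective (fun f => (f : ↥W → F)) DFunLike.coe_injective
  have hdimM : finrank F ↥W = d := hW
  set U₀ : Submodule F ↥W := U.comap W.subtype with hU₀def
  have hU₀ : finrank F U₀ = k := by
    rw [← hU]; exact (Submodule.comapSubtypeEquivOfLe hUW).finrank_eq
  set A : Set (Module.Dual F ↥W) := (U₀.dualAnnihilator : Set (Module.Dual F ↥W)) \ {0} with hAdef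
  have hmemA : ∀ φ : Module.Dual F ↥W, φ ∈ A ↔ (φ ≠ 0 ∧ U₀ ≤ LinearMap.ker φ) := by
    intro φ
    simp only [hAdef, Set.mem_diff, Set.mem_singleton_iff, SetLike.mem_coe,
      Submodule.mem_dualAnnihilator]
    constructor
    · rintro ⟨h1, h2⟩; exact ⟨h2, fun x hx => LinearMap.mem_ker.2 (h1 x hx)⟩
    · rintro ⟨h1, h2⟩; exact ⟨fun x hx => LinearMap.mem_ker.1 (h2 hx), h1⟩
  have hAnn : finrank F U₀.dualAnnihilator = d - k := by
    have h1 : finrank F (↥W ⧸ U₀) = finrank F U₀.dualAnnihilator :=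
      LinearEquiv.finrank_eq (R := F) (M := ↥W ⧸ U₀) (N := ↥U₀.dualAnnihilator)
        (Subspace.quotEquivAnnihilator U₀)
    have h2 := Submodule.finrank_quotient_add_finrank U₀
    omega
  have hAcard : A.ncard = Fintype.card F ^ (d - k) - 1 := by
    haveI : Fintype ↥(U₀.dualAnnihilator) := Fintype.ofFinite _
    rw [hAdef, Set.ncard_diff_singleton_of_mem (by simp : (0 : Module.Dual F ↥W) ∈ _)]
    congr 1
    rw [← Nat.card_coe_set_eq]
    have hc : Nat.card ↥(U₀.dualAnnihilator : Set (Module.Dual F ↥W))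
        = Nat.card ↥U₀.dualAnnihilator := rfl
    rw [hc, Nat.card_eq_fintype_card, card_eq_pow_finrank (K := F), hAnn]
  set f : Module.Dual F ↥W → Submodule F V := fun φ => (LinearMap.ker φ).map W.subtype with hfdef
  have hker : ∀ φ : Module.Dual F ↥W, φ ≠ 0 → finrank F (LinearMap.ker φ) = d - 1 := by
    intro φ hφ
    obtain ⟨v, hv⟩ : ∃ v, φ v ≠ 0 := by
      by_contra hc; push_neg at hc
      exact hφ (LinearMap.ext fun x => by simp [hc x])
    have hrange : LinearMap.range φ = ⊤ := by
      rw [eq_top_iff]; intro c _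
      exact ⟨(c * (φ v)⁻¹) • v, by rw [map_smul, smul_eq_mul, mul_assoc, inv_mul_cancel₀ hv, mul_one]⟩
    have h2 := LinearMap.finrank_range_add_finrank_ker φ
    rw [hrange, finrank_top, Module.finrank_self, hdimM] at h2
    omega
  have hmap : ∀ φ ∈ A, f φ ∈ {S : Submodule F V | S ≤ W ∧ finrank F S = d - 1 ∧ U ≤ S} := by
    intro φ hφ
    obtain ⟨hφ0, hφann⟩ := (hmemA φ).1 hφ
    refine ⟨Submodule.map_subtype_le W _, ?_, ?_⟩
    · rw [Submodule.finrank_map_subtype_eq]; exact hker φ hφ0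
    · have h1 : U = U₀.map W.subtype := by
        rw [hU₀def, Submodule.map_comap_subtype, inf_eq_right.2 hUW]
      rw [h1]; exact Submodule.map_mono hφann
  have hfib : ∀ Sm ∈ {S : Submodule F V | S ≤ W ∧ finrank F S = d - 1 ∧ U ≤ S},
      {φ ∈ A | f φ = Sm}.ncard = Fintype.card F - 1 := by
    rintro Sm ⟨hSW, hSrank, hUS⟩
    set S₀ : Submodule F ↥W := Sm.comap W.subtype with hS₀def
    have hS₀rank : finrank F S₀ = d - 1 := by
      rw [← hSrank]; exact (Submodule.comapSubtypeEquivOfLe hSW).finrank_eq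
    have hmapS₀ : S₀.map W.subtype = Sm := by
      rw [hS₀def, Submodule.map_comap_subtype]; exact inf_eq_right.2 hSW
    obtain ⟨φ₀, hφ₀, hkφ₀⟩ := exists_ker_eq hdimM hS₀rank (by omega)
    have hU₀S₀ : U₀ ≤ S₀ := Submodule.comap_mono hUS
    have hfibeq : {φ ∈ A | f φ = Sm} = (fun c : F => c • φ₀) '' {c | c ≠ 0} := by
      ext ψ
      constructor
      · rintro ⟨hψA, hfψ⟩
        obtain ⟨hψ0, hψann⟩ := (hmemA ψ).1 hψA
        have hkψ : LinearMap.ker ψ = S₀ := by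
          apply Submodule.map_injective_of_injective (Submodule.injective_subtype W)
          rw [hmapS₀]; exact hfψ
        obtain ⟨c, hc, hψeq⟩ := ker_scal hφ₀ (hkψ.trans hkφ₀.symm)
        exact ⟨c, hc, hψeq.symm⟩
      · rintro ⟨c, hc, rfl⟩
        have hkeq : LinearMap.ker (c • φ₀) = S₀ := by
          rw [LinearMap.ker_smul _ _ hc, hkφ₀]
        refine ⟨(hmemA _).2 ⟨smul_ne_zero hc hφ₀, ?_⟩, ?_⟩
        · rw [hkeq]; exact hU₀S₀
        · show (LinearMap.ker (c • φ₀)).map W.subtype = Sm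
          rw [hkeq, hmapS₀]
    rw [hfibeq, Set.ncard_image_of_injOn ?_]
    · have : {c : F | c ≠ 0} = Set.univ \ {0} := by ext c; simp
      rw [this, Set.ncard_diff_singleton_of_mem (Set.mem_univ _), Set.ncard_univ,
        Nat.card_eq_fintype_card]
    · intro a _ b _ hab
      simp only at hab
      by_contra hne
      have hz : (a - b) • φ₀ = 0 := by
        ext x; have hx := LinearMap.congr_fun hab x
        simp only [LinearMap.smul_apply, smul_eq_mul] at hx ⊢
        simp [sub_mul, hx]
      rcases smul_eq_zero.1 hz with h | h
      · exact hne (sub_eq_zero.1 h)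
      · exact hφ₀ h
  have := fiber_count (Set.toFinite _) f hmap _ hfib
  rw [hAcard] at this
  exact this



lemma setup_values (q n : ℕ) (hq : 2 < q) (hn : 4 ≤ n) (H₂ C₁ C₂ C₃ : ℕ)
    (hH₂ : (H₂ : ℤ) = 1 + (q : ℤ) ^ 2 * (((q : ℤ) ^ (n - 1) + (-1) ^ n) * ((q : ℤ) ^ (n - 2) - (-1) ^ n)) / ((q : ℤ) ^ 2 - 1))
    (hC₁ : (C₁ : ℤ) = ((q : ℤ) ^ (n - 1) + (-1) ^ n) * ((q : ℤ) ^ (n - 2) - (-1) ^ n) / ((q : ℤ) ^ 2 - 1))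
    (hC₂ : (C₂ : ℤ) = 1 + (q : ℤ) ^ 2 * (((q : ℤ) ^ (n - 2) - (-1) ^ n) * ((q : ℤ) ^ (n - 3) + (-1) ^ n)) / ((q : ℤ) ^ 2 - 1))
    (hC₃ : (C₃ : ℤ) = 1 + (q : ℤ) ^ 2 + (q : ℤ) ^ 4 * (((q : ℤ) ^ (n - 3) + (-1) ^ n) * ((q : ℤ) ^ (n - 4) - (-1) ^ n)) / ((q : ℤ) ^ 2 - 1)) :
    ∃ s : ℤ, 0 ≤ s ∧
      (((-1 : ℤ) ^ n = 1 ∧ (q : ℤ) ^ (n - 4) = 1 + ((q : ℤ) ^ 2 - 1) * s ∧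
        (C₁ : ℤ) = ((q : ℤ) ^ 3 * (q : ℤ) ^ (n - 4) + 1) * (1 + (q : ℤ) ^ 2 * s) ∧
        (C₂ : ℤ) = 1 + (q : ℤ) ^ 2 * ((1 + (q : ℤ) ^ 2 * s) * ((q : ℤ) * (q : ℤ) ^ (n - 4) + 1)) ∧
        (C₃ : ℤ) = 1 + (q : ℤ) ^ 2 + (q : ℤ) ^ 4 * (((q : ℤ) * (q : ℤ) ^ (n - 4) + 1) * s) ∧
        (H₂ : ℤ) = 1 + (q : ℤ) ^ 2 * (((q : ℤ) ^ 3 * (q : ℤ) ^ (n - 4) + 1) * (1 + (q : ℤ) ^ 2 * s))) ∨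
       ((-1 : ℤ) ^ n = -1 ∧ (q : ℤ) * (q : ℤ) ^ (n - 4) = 1 + ((q : ℤ) ^ 2 - 1) * s ∧
        (C₁ : ℤ) = (1 + (q : ℤ) ^ 2 * s) * ((q : ℤ) ^ 2 * (q : ℤ) ^ (n - 4) + 1) ∧
        (C₂ : ℤ) = 1 + (q : ℤ) ^ 2 * (((q : ℤ) ^ 2 * (q : ℤ) ^ (n - 4) + 1) * s) ∧
        (C₃ : ℤ) = 1 + (q : ℤ) ^ 2 + (q : ℤ) ^ 4 * (s * ((q : ℤ) ^ (n - 4) + 1)) ∧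
        (H₂ : ℤ) = 1 + (q : ℤ) ^ 2 * ((1 + (q : ℤ) ^ 2 * s) * ((q : ℤ) ^ 2 * (q : ℤ) ^ (n - 4) + 1)))) := by
  have hY : (3 : ℤ) ≤ (q : ℤ) := by exact_mod_cast hq
  have hT1 : (1 : ℤ) ≤ (q : ℤ) ^ (n - 4) := one_le_pow₀ (by linarith)
  have hEne : ((q : ℤ) ^ 2 - 1) ≠ 0 := by nlinarith
  have hp3 : (q : ℤ) ^ (n - 3) = (q : ℤ) * (q : ℤ) ^ (n - 4) := by
    rw [show n - 3 = (n - 4) + 1 by omega, pow_succ']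
  have hp2 : (q : ℤ) ^ (n - 2) = (q : ℤ) ^ 2 * (q : ℤ) ^ (n - 4) := by
    rw [show n - 2 = 2 + (n - 4) by omega, pow_add]
  have hp1 : (q : ℤ) ^ (n - 1) = (q : ℤ) ^ 3 * (q : ℤ) ^ (n - 4) := by
    rw [show n - 1 = 3 + (n - 4) by omega, pow_add]
  rcases Nat.even_or_odd n with he | ho
  · -- even case
    have hε : ((-1 : ℤ)) ^ n = 1 := he.neg_one_pow
    obtain ⟨m, hm⟩ := he
    have hdvd : ((q : ℤ) ^ 2 - 1) ∣ (q : ℤ) ^ (n - 4) - 1 := by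
      have h1 : (q : ℤ) ^ (n - 4) = ((q : ℤ) ^ 2) ^ (m - 2) := by
        rw [← pow_mul]; congr 1; omega
      rw [h1]
      simpa using sub_dvd_pow_sub_pow ((q : ℤ) ^ 2) 1 (m - 2)
    obtain ⟨s, hs⟩ := hdvd
    have hrel : (q : ℤ) ^ (n - 4) = 1 + ((q : ℤ) ^ 2 - 1) * s := by linarith
    have hs0 : 0 ≤ s := by
      by_contra hneg
      push_neg at hneg
      have h1 : ((q : ℤ) ^ 2 - 1) * s ≤ ((q : ℤ) ^ 2 - 1) * (-1) :=
        mul_le_mul_of_nonneg_left (by omega) (by nlinarith)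
      nlinarith
    refine ⟨s, hs0, Or.inl ⟨hε, hrel, ?_, ?_, ?_, ?_⟩⟩
    · rw [hC₁, hε, hp1, hp2]
      rw [show ((q : ℤ) ^ 3 * (q : ℤ) ^ (n - 4) + 1) * ((q : ℤ) ^ 2 * (q : ℤ) ^ (n - 4) - 1)
          = ((q : ℤ) ^ 2 - 1) * (((q : ℤ) ^ 3 * (q : ℤ) ^ (n - 4) + 1) * (1 + (q : ℤ) ^ 2 * s))
          from by linear_combination ((q : ℤ) ^ 5 * (q : ℤ) ^ (n - 4) + (q : ℤ) ^ 2) * hrel]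
      exact Int.mul_ediv_cancel_left _ hEne
    · rw [hC₂, hε, hp2, hp3]
      congr 1
      rw [show (q : ℤ) ^ 2 * (((q : ℤ) ^ 2 * (q : ℤ) ^ (n - 4) - 1) * ((q : ℤ) * (q : ℤ) ^ (n - 4) + 1))
          = ((q : ℤ) ^ 2 - 1) * ((q : ℤ) ^ 2 * ((1 + (q : ℤ) ^ 2 * s) * ((q : ℤ) * (q : ℤ) ^ (n - 4) + 1)))
          from by linear_combination ((q : ℤ) ^ 5 * (q : ℤ) ^ (n - 4) + (q : ℤ) ^ 4) * hrel]
      exact Int.mul_ediv_cancel_left _ hEne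
    · rw [hC₃, hε, hp3]
      congr 1
      rw [show (q : ℤ) ^ 4 * (((q : ℤ) * (q : ℤ) ^ (n - 4) + 1) * ((q : ℤ) ^ (n - 4) - 1))
          = ((q : ℤ) ^ 2 - 1) * ((q : ℤ) ^ 4 * (((q : ℤ) * (q : ℤ) ^ (n - 4) + 1) * s))
          from by linear_combination ((q : ℤ) ^ 5 * (q : ℤ) ^ (n - 4) + (q : ℤ) ^ 4) * hrel]
      exact Int.mul_ediv_cancel_left _ hEne
    · rw [hH₂, hε, hp1, hp2]
      congr 1
      rw [show (q : ℤ) ^ 2 * (((q : ℤ) ^ 3 * (q : ℤ) ^ (n - 4) + 1) * ((q : ℤ) ^ 2 * (q : ℤ) ^ (n - 4) - 1))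
          = ((q : ℤ) ^ 2 - 1) * ((q : ℤ) ^ 2 * (((q : ℤ) ^ 3 * (q : ℤ) ^ (n - 4) + 1) * (1 + (q : ℤ) ^ 2 * s)))
          from by linear_combination ((q : ℤ) ^ 7 * (q : ℤ) ^ (n - 4) + (q : ℤ) ^ 4) * hrel]
      exact Int.mul_ediv_cancel_left _ hEne
  · -- odd case
    have hε : ((-1 : ℤ)) ^ n = -1 := ho.neg_one_pow
    obtain ⟨m, hm⟩ := ho
    have hdvd : ((q : ℤ) ^ 2 - 1) ∣ (q : ℤ) * (q : ℤ) ^ (n - 4) - 1 := by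
      have h1 : (q : ℤ) * (q : ℤ) ^ (n - 4) = ((q : ℤ) ^ 2) ^ (m - 1) := by
        rw [← hp3, ← pow_mul]; congr 1; omega
      rw [h1]
      simpa using sub_dvd_pow_sub_pow ((q : ℤ) ^ 2) 1 (m - 1)
    obtain ⟨s, hs⟩ := hdvd
    have hrel : (q : ℤ) * (q : ℤ) ^ (n - 4) = 1 + ((q : ℤ) ^ 2 - 1) * s := by linarith
    have hs0 : 0 ≤ s := by
      by_contra hneg
      push_neg at hneg
      have h1 : ((q : ℤ) ^ 2 - 1) * s ≤ ((q : ℤ) ^ 2 - 1) * (-1) :=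
        mul_le_mul_of_nonneg_left (by omega) (by nlinarith)
      nlinarith
    refine ⟨s, hs0, Or.inr ⟨hε, hrel, ?_, ?_, ?_, ?_⟩⟩
    · rw [hC₁, hε, hp1, hp2]
      rw [show ((q : ℤ) ^ 3 * (q : ℤ) ^ (n - 4) + -1) * ((q : ℤ) ^ 2 * (q : ℤ) ^ (n - 4) - -1)
          = ((q : ℤ) ^ 2 - 1) * ((1 + (q : ℤ) ^ 2 * s) * ((q : ℤ) ^ 2 * (q : ℤ) ^ (n - 4) + 1))
          from by linear_combination ((q : ℤ) ^ 4 * (q : ℤ) ^ (n - 4) + (q : ℤ) ^ 2) * hrel]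
      exact Int.mul_ediv_cancel_left _ hEne
    · rw [hC₂, hε, hp2, hp3]
      congr 1
      rw [show (q : ℤ) ^ 2 * (((q : ℤ) ^ 2 * (q : ℤ) ^ (n - 4) - -1) * ((q : ℤ) * (q : ℤ) ^ (n - 4) + -1))
          = ((q : ℤ) ^ 2 - 1) * ((q : ℤ) ^ 2 * (((q : ℤ) ^ 2 * (q : ℤ) ^ (n - 4) + 1) * s))
          from by linear_combination ((q : ℤ) ^ 4 * (q : ℤ) ^ (n - 4) + (q : ℤ) ^ 2) * hrel]
      exact Int.mul_ediv_cancel_left _ hEne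
    · rw [hC₃, hε, hp3]
      congr 1
      rw [show (q : ℤ) ^ 4 * (((q : ℤ) * (q : ℤ) ^ (n - 4) + -1) * ((q : ℤ) ^ (n - 4) - -1))
          = ((q : ℤ) ^ 2 - 1) * ((q : ℤ) ^ 4 * (s * ((q : ℤ) ^ (n - 4) + 1)))
          from by linear_combination ((q : ℤ) ^ 4 * (q : ℤ) ^ (n - 4) + (q : ℤ) ^ 4) * hrel]
      exact Int.mul_ediv_cancel_left _ hEne
    · rw [hH₂, hε, hp1, hp2]
      congr 1
      rw [show (q : ℤ) ^ 2 * (((q : ℤ) ^ 3 * (q : ℤ) ^ (n - 4) + -1) * ((q : ℤ) ^ 2 * (q : ℤ) ^ (n - 4) - -1))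
          = ((q : ℤ) ^ 2 - 1) * ((q : ℤ) ^ 2 * ((1 + (q : ℤ) ^ 2 * s) * ((q : ℤ) ^ 2 * (q : ℤ) ^ (n - 4) + 1)))
          from by linear_combination ((q : ℤ) ^ 6 * (q : ℤ) ^ (n - 4) + (q : ℤ) ^ 4) * hrel]
      exact Int.mul_ediv_cancel_left _ hEne


lemma alg_lemma (q n : ℕ) (hq : 2 < q) (hn : 4 ≤ n) (H₂ C₁ C₂ C₃ : ℕ)
    (hH₂ : (H₂ : ℤ) = 1 + (q : ℤ) ^ 2 * (((q : ℤ) ^ (n - 1) + (-1) ^ n) * ((q : ℤ) ^ (n - 2) - (-1) ^ n)) / ((q : ℤ) ^ 2 - 1))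
    (hC₁ : (C₁ : ℤ) = ((q : ℤ) ^ (n - 1) + (-1) ^ n) * ((q : ℤ) ^ (n - 2) - (-1) ^ n) / ((q : ℤ) ^ 2 - 1))
    (hC₂ : (C₂ : ℤ) = 1 + (q : ℤ) ^ 2 * (((q : ℤ) ^ (n - 2) - (-1) ^ n) * ((q : ℤ) ^ (n - 3) + (-1) ^ n)) / ((q : ℤ) ^ 2 - 1))
    (hC₃ : (C₃ : ℤ) = 1 + (q : ℤ) ^ 2 + (q : ℤ) ^ 4 * (((q : ℤ) ^ (n - 3) + (-1) ^ n) * ((q : ℤ) ^ (n - 4) - (-1) ^ n)) / ((q : ℤ) ^ 2 - 1))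
    (x₁ x₂ x₃ : ℕ)
    (e1 : ((q:ℤ)^2 - 1) * ((x₁:ℤ) + (x₂:ℤ) + (x₃:ℤ)) = (q:ℤ)^(2*n) - 1)
    (e2 : ((q:ℤ)^2 - 1) * ((C₁:ℤ)*(x₁:ℤ) + (C₂:ℤ)*(x₂:ℤ) + (C₃:ℤ)*(x₃:ℤ)) = (H₂:ℤ) * ((q:ℤ)^(2*(n-1)) - 1))
    (e3 : ((q:ℤ)^2 - 1) * (((C₁:ℤ)^2 - (C₁:ℤ))*(x₁:ℤ) + ((C₂:ℤ)^2 - (C₂:ℤ))*(x₂:ℤ) + ((C₃:ℤ)^2 - (C₃:ℤ))*(x₃:ℤ))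
        = ((H₂:ℤ)^2 - (H₂:ℤ)) * ((q:ℤ)^(2*(n-2)) - 1)) :
    (x₁:ℤ) = (q : ℤ) ^ (2 * n - 2) ∧
    (x₂:ℤ) = (q : ℤ) ^ (n - 2) * ((q : ℤ) ^ (n - 1) + (-1) ^ n) / ((q : ℤ) + 1) ∧
    (x₃:ℤ) = ((q : ℤ) ^ (n - 1) + (-1) ^ n) * ((q : ℤ) ^ (n - 2) - (-1) ^ n) / ((q : ℤ) ^ 2 - 1) := by
  have hY : (3 : ℤ) ≤ (q : ℤ) := by exact_mod_cast hq
  have hT1 : (1 : ℤ) ≤ (q : ℤ) ^ (n - 4) := one_le_pow₀ (by linarith)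
  have hEne : ((q : ℤ) ^ 2 - 1) ≠ 0 := by nlinarith
  have hQ1ne : ((q : ℤ) + 1) ≠ 0 := by intro h; linarith
  have hq1 : (0:ℤ) < (q:ℤ) - 1 := by linarith
  have hp3 : (q : ℤ) ^ (n - 3) = (q : ℤ) * (q : ℤ) ^ (n - 4) := by
    rw [show n - 3 = (n - 4) + 1 by omega, pow_succ']
  have hp2 : (q : ℤ) ^ (n - 2) = (q : ℤ) ^ 2 * (q : ℤ) ^ (n - 4) := by
    rw [show n - 2 = 2 + (n - 4) by omega, pow_add]
  have hp1 : (q : ℤ) ^ (n - 1) = (q : ℤ) ^ 3 * (q : ℤ) ^ (n - 4) := by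
    rw [show n - 1 = 3 + (n - 4) by omega, pow_add]
  have hpn : (q : ℤ) ^ n = (q : ℤ) ^ 4 * (q : ℤ) ^ (n - 4) := by
    conv_lhs => rw [show n = 4 + (n - 4) by omega]
    rw [pow_add]
  have hP1 : (q:ℤ)^(2*n) = ((q:ℤ)^4 * (q:ℤ)^(n-4))^2 := by
    rw [show 2*n = n*2 by ring, pow_mul, hpn]
  have hP2 : (q:ℤ)^(2*(n-1)) = ((q:ℤ)^3 * (q:ℤ)^(n-4))^2 := by
    rw [show 2*(n-1) = (n-1)*2 by ring, pow_mul, hp1]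
  have hP3 : (q:ℤ)^(2*(n-2)) = ((q:ℤ)^2 * (q:ℤ)^(n-4))^2 := by
    rw [show 2*(n-2) = (n-2)*2 by ring, pow_mul, hp2]
  have hG1 : (q:ℤ)^(2*n-2) = ((q:ℤ)^3 * (q:ℤ)^(n-4))^2 := by
    rw [show 2*n-2 = (n-1)*2 by omega, pow_mul, hp1]
  rw [hP1] at e1
  rw [hP2] at e2
  rw [hP3] at e3
  have hpos2 : (0:ℤ) < (q:ℤ)^4 * ((q:ℤ)^(n-4))^2 * (((q:ℤ)-1) * (((q:ℤ)-1) * ((q:ℤ)+1))) :=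
    mul_pos (by positivity) (mul_pos hq1 (mul_pos hq1 (by linarith)))
  have hpos3 : (0:ℤ) < (q:ℤ)^5 * ((q:ℤ)^(n-4))^2 * (((q:ℤ)-1) * ((q:ℤ)+1)) :=
    mul_pos (by positivity) (mul_pos hq1 (by linarith))
  have hpos4 : (0:ℤ) < (q:ℤ)^5 * ((q:ℤ)^(n-4))^2 * (((q:ℤ)-1) * (((q:ℤ)-1) * ((q:ℤ)+1))) :=
    mul_pos (by positivity) (mul_pos hq1 (mul_pos hq1 (by linarith)))
  obtain ⟨s, hs0, hcase⟩ := setup_values q n hq hn H₂ C₁ C₂ C₃ hH₂ hC₁ hC₂ hC₃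
  rcases hcase with ⟨hε, hrel, hv1, hv2, hv3, hvH⟩ | ⟨hε, hrel, hv1, hv2, hv3, hvH⟩
  · rw [hv1, hv2, hv3, hvH] at e2 e3
    have hx1 : (-(q:ℤ)^7*((q:ℤ)^(n-4))^2 + (q:ℤ)^6*((q:ℤ)^(n-4))^2 + (q:ℤ)^5*((q:ℤ)^(n-4))^2 - (q:ℤ)^4*((q:ℤ)^(n-4))^2) * (x₁:ℤ) = (-(q:ℤ)^7*((q:ℤ)^(n-4))^2 + (q:ℤ)^6*((q:ℤ)^(n-4))^2 + (q:ℤ)^5*((q:ℤ)^(n-4))^2 - (q:ℤ)^4*((q:ℤ)^(n-4))^2) * ((q:ℤ)^6*((q:ℤ)^(n-4))^2) := by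
      linear_combination e3 + (-2*(q:ℤ)^5*((q:ℤ)^(n-4))*s - 2*(q:ℤ)^4*s - (q:ℤ)^3*((q:ℤ)^(n-4)) - 2*(q:ℤ)^2 - 1) * e2 + ((q:ℤ)^10*((q:ℤ)^(n-4))^2*s^2 + 2*(q:ℤ)^9*((q:ℤ)^(n-4))*s^2 + (q:ℤ)^8*((q:ℤ)^(n-4))^2*s + (q:ℤ)^8*s^2 + 3*(q:ℤ)^7*((q:ℤ)^(n-4))*s + 2*(q:ℤ)^6*s + 2*(q:ℤ)^5*((q:ℤ)^(n-4))*s + (q:ℤ)^5*((q:ℤ)^(n-4)) + 2*(q:ℤ)^4*s + (q:ℤ)^4 + (q:ℤ)^3*((q:ℤ)^(n-4)) + 2*(q:ℤ)^2 + 1) * e1 + (-(q:ℤ)^14*((q:ℤ)^(n-4))^2*s + (q:ℤ)^13*((q:ℤ)^(n-4))^3 - (q:ℤ)^12*((q:ℤ)^(n-4))^3 + 2*(q:ℤ)^12*((q:ℤ)^(n-4))^2*s - (q:ℤ)^12*((q:ℤ)^(n-4))^2 - (q:ℤ)^11*((q:ℤ)^(n-4))^3 + (q:ℤ)^10*((q:ℤ)^(n-4))^3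 - (q:ℤ)^10*((q:ℤ)^(n-4))^2*s + (q:ℤ)^10*((q:ℤ)^(n-4))^2 + (q:ℤ)^8*s*(x₁:ℤ) - (q:ℤ)^7*((q:ℤ)^(n-4))*(x₁:ℤ) + (q:ℤ)^6*((q:ℤ)^(n-4))*(x₁:ℤ) - 2*(q:ℤ)^6*s*(x₁:ℤ) + (q:ℤ)^6*(x₁:ℤ) + (q:ℤ)^5*((q:ℤ)^(n-4))*(x₁:ℤ) - (q:ℤ)^4*((q:ℤ)^(n-4))*(x₁:ℤ) + (q:ℤ)^4*s*(x₁:ℤ) - (q:ℤ)^4*(x₁:ℤ)) * hrel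
    have hx2 : ((q:ℤ)^7*((q:ℤ)^(n-4))^2 - (q:ℤ)^5*((q:ℤ)^(n-4))^2) * (x₂:ℤ) = ((q:ℤ)^7*((q:ℤ)^(n-4))^2 - (q:ℤ)^5*((q:ℤ)^(n-4))^2) * ((q:ℤ)^6*((q:ℤ)^(n-4))*s - (q:ℤ)^5*((q:ℤ)^(n-4))*s + (q:ℤ)^4*((q:ℤ)^(n-4)) - (q:ℤ)^3*((q:ℤ)^(n-4)) + (q:ℤ)^2*((q:ℤ)^(n-4))) := by
      linear_combination e3 + (-2*(q:ℤ)^5*((q:ℤ)^(n-4))*s - (q:ℤ)^4*s - (q:ℤ)^3*((q:ℤ)^(n-4)) - (q:ℤ)^2*s - (q:ℤ)^2 - 1) * e2 + ((q:ℤ)^10*((q:ℤ)^(n-4))^2*s^2 + (q:ℤ)^9*((q:ℤ)^(n-4))*s^2 + (q:ℤ)^8*((q:ℤ)^(n-4))^2*s + (q:ℤ)^7*((q:ℤ)^(n-4))*s^2 + 2*(q:ℤ)^7*((q:ℤ)^(n-4))*s + (q:ℤ)^6*s^2 + 2*(q:ℤ)^5*((q:ℤ)^(n-4))*s + (q:ℤ)^5*((q:ℤ)^(n-4))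 + 2*(q:ℤ)^4*s + (q:ℤ)^3*((q:ℤ)^(n-4)) + (q:ℤ)^2*s + (q:ℤ)^2 + 1) * e1 + ((q:ℤ)^12*((q:ℤ)^(n-4))^2*s - (q:ℤ)^10*((q:ℤ)^(n-4))^2*s + (q:ℤ)^10*((q:ℤ)^(n-4))^2 + (q:ℤ)^9*((q:ℤ)^(n-4))*s - (q:ℤ)^8*((q:ℤ)^(n-4))^2 + (q:ℤ)^7*((q:ℤ)^(n-4))^2 - (q:ℤ)^7*((q:ℤ)^(n-4))*s + (q:ℤ)^7*((q:ℤ)^(n-4))*(x₂:ℤ) + (q:ℤ)^7*((q:ℤ)^(n-4)) - (q:ℤ)^5*((q:ℤ)^(n-4))*(x₂:ℤ)) * hrel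
    have hx3 : ((q:ℤ)^8*((q:ℤ)^(n-4))^2 - (q:ℤ)^7*((q:ℤ)^(n-4))^2 - (q:ℤ)^6*((q:ℤ)^(n-4))^2 + (q:ℤ)^5*((q:ℤ)^(n-4))^2) * (x₃:ℤ) = ((q:ℤ)^8*((q:ℤ)^(n-4))^2 - (q:ℤ)^7*((q:ℤ)^(n-4))^2 - (q:ℤ)^6*((q:ℤ)^(n-4))^2 + (q:ℤ)^5*((q:ℤ)^(n-4))^2) * ((q:ℤ)^5*((q:ℤ)^(n-4))*s + (q:ℤ)^3*((q:ℤ)^(n-4)) + (q:ℤ)^2*s + 1) := by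
      linear_combination e3 + (-2*(q:ℤ)^5*((q:ℤ)^(n-4))*s - (q:ℤ)^4*s - 2*(q:ℤ)^3*((q:ℤ)^(n-4)) - (q:ℤ)^2*s - (q:ℤ)^2 - 1) * e2 + ((q:ℤ)^10*((q:ℤ)^(n-4))^2*s^2 + (q:ℤ)^9*((q:ℤ)^(n-4))*s^2 + 2*(q:ℤ)^8*((q:ℤ)^(n-4))^2*s + (q:ℤ)^7*((q:ℤ)^(n-4))*s^2 + 2*(q:ℤ)^7*((q:ℤ)^(n-4))*s + (q:ℤ)^6*((q:ℤ)^(n-4))^2 + (q:ℤ)^6*s^2 + 3*(q:ℤ)^5*((q:ℤ)^(n-4))*s + (q:ℤ)^5*((q:ℤ)^(n-4)) + 2*(q:ℤ)^4*s + 2*(q:ℤ)^3*((q:ℤ)^(n-4)) + (q:ℤ)^2*s + (q:ℤ)^2 + 1) * e1 + ((q:ℤ)^12*((q:ℤ)^(n-4))^2*s - (q:ℤ)^10*((q:ℤ)^(n-4))^2*s + (q:ℤ)^10*((q:ℤ)^(n-4))^2 + (q:ℤ)^9*((q:ℤ)^(n-4))*s - (q:ℤ)^8*((q:ℤ)^(n-4))^2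 - (q:ℤ)^7*((q:ℤ)^(n-4))*s - (q:ℤ)^7*((q:ℤ)^(n-4))*(x₃:ℤ) + (q:ℤ)^7*((q:ℤ)^(n-4)) + (q:ℤ)^5*((q:ℤ)^(n-4))*(x₃:ℤ) - (q:ℤ)^5*((q:ℤ)^(n-4))) * hrel
    have hk1ne : (-(q:ℤ)^7*((q:ℤ)^(n-4))^2 + (q:ℤ)^6*((q:ℤ)^(n-4))^2 + (q:ℤ)^5*((q:ℤ)^(n-4))^2 - (q:ℤ)^4*((q:ℤ)^(n-4))^2) ≠ 0 := by
      intro h0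
      have hcontra : (q:ℤ)^4 * ((q:ℤ)^(n-4))^2 * (((q:ℤ)-1) * (((q:ℤ)-1) * ((q:ℤ)+1))) = 0 := by
        linear_combination -h0
      exact absurd hcontra (ne_of_gt hpos2)
    have hk2ne : ((q:ℤ)^7*((q:ℤ)^(n-4))^2 - (q:ℤ)^5*((q:ℤ)^(n-4))^2) ≠ 0 := by
      intro h0
      have hcontra : (q:ℤ)^5 * ((q:ℤ)^(n-4))^2 * (((q:ℤ)-1) * ((q:ℤ)+1)) = 0 := by
        linear_combination h0
      exact absurd hcontra (ne_of_gt hpos3)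
    have hk3ne : ((q:ℤ)^8*((q:ℤ)^(n-4))^2 - (q:ℤ)^7*((q:ℤ)^(n-4))^2 - (q:ℤ)^6*((q:ℤ)^(n-4))^2 + (q:ℤ)^5*((q:ℤ)^(n-4))^2) ≠ 0 := by
      intro h0
      have hcontra : (q:ℤ)^5 * ((q:ℤ)^(n-4))^2 * (((q:ℤ)-1) * (((q:ℤ)-1) * ((q:ℤ)+1))) = 0 := by
        linear_combination h0
      exact absurd hcontra (ne_of_gt hpos4)
    have hval1 : (x₁:ℤ) = ((q:ℤ)^6*((q:ℤ)^(n-4))^2) := mul_left_cancel₀ hk1ne hx1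
    have hval2 : (x₂:ℤ) = ((q:ℤ)^6*((q:ℤ)^(n-4))*s - (q:ℤ)^5*((q:ℤ)^(n-4))*s + (q:ℤ)^4*((q:ℤ)^(n-4)) - (q:ℤ)^3*((q:ℤ)^(n-4)) + (q:ℤ)^2*((q:ℤ)^(n-4))) := mul_left_cancel₀ hk2ne hx2
    have hval3 : (x₃:ℤ) = ((q:ℤ)^5*((q:ℤ)^(n-4))*s + (q:ℤ)^3*((q:ℤ)^(n-4)) + (q:ℤ)^2*s + 1) := mul_left_cancel₀ hk3ne hx3
    refine ⟨?_, ?_, ?_⟩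
    · rw [hval1, hG1]; ring
    · rw [hval2, hε, hp1, hp2]
      rw [show (q:ℤ)^2*(q:ℤ)^(n-4) * ((q:ℤ)^3*(q:ℤ)^(n-4) + 1) = ((q:ℤ)+1) * (((q:ℤ)^6*((q:ℤ)^(n-4))*s - (q:ℤ)^5*((q:ℤ)^(n-4))*s + (q:ℤ)^4*((q:ℤ)^(n-4)) - (q:ℤ)^3*((q:ℤ)^(n-4)) + (q:ℤ)^2*((q:ℤ)^(n-4)))) from by
        linear_combination ((q:ℤ)^5*((q:ℤ)^(n-4))) * hrel]
      exact (Int.mul_ediv_cancel_left _ hQ1ne).symm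
    · rw [hval3, hε, hp1, hp2]
      rw [show ((q:ℤ)^3*(q:ℤ)^(n-4) + 1) * ((q:ℤ)^2*(q:ℤ)^(n-4) - 1) = ((q:ℤ)^2-1) * (((q:ℤ)^5*((q:ℤ)^(n-4))*s + (q:ℤ)^3*((q:ℤ)^(n-4)) + (q:ℤ)^2*s + 1)) from by
        linear_combination ((q:ℤ)^5*((q:ℤ)^(n-4)) + (q:ℤ)^2) * hrel]
      exact (Int.mul_ediv_cancel_left _ hEne).symm
  · rw [hv1, hv2, hv3, hvH] at e2 e3
    have hx1 : (-(q:ℤ)^7*((q:ℤ)^(n-4))^2 + (q:ℤ)^6*((q:ℤ)^(n-4))^2 + (q:ℤ)^5*((q:ℤ)^(n-4))^2 - (q:ℤ)^4*((q:ℤ)^(n-4))^2) * (x₁:ℤ) = (-(q:ℤ)^7*((q:ℤ)^(n-4))^2 + (q:ℤ)^6*((q:ℤ)^(n-4))^2 + (q:ℤ)^5*((q:ℤ)^(n-4))^2 - (q:ℤ)^4*((q:ℤ)^(n-4))^2) * ((q:ℤ)^6*((q:ℤ)^(n-4))^2) := by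
      linear_combination e3 + (-2*(q:ℤ)^4*((q:ℤ)^(n-4))*s - (q:ℤ)^4*s - (q:ℤ)^2*s - (q:ℤ)^2 - 1) * e2 + ((q:ℤ)^8*((q:ℤ)^(n-4))^2*s^2 + (q:ℤ)^8*((q:ℤ)^(n-4))*s^2 + (q:ℤ)^6*((q:ℤ)^(n-4))*s^2 + (q:ℤ)^6*((q:ℤ)^(n-4))*s + (q:ℤ)^6*s^2 + 2*(q:ℤ)^4*((q:ℤ)^(n-4))*s + 2*(q:ℤ)^4*s + (q:ℤ)^2*s + (q:ℤ)^2 + 1) * e1 + ((q:ℤ)^12*((q:ℤ)^(n-4))^3 - (q:ℤ)^10*((q:ℤ)^(n-4))^3 + (q:ℤ)^10*((q:ℤ)^(n-4))^2*s + (q:ℤ)^9*((q:ℤ)^(n-4))^3 - (q:ℤ)^8*((q:ℤ)^(n-4))^2*s + (q:ℤ)^8*((q:ℤ)^(n-4))^2 + (q:ℤ)^8*((q:ℤ)^(n-4))*s + (q:ℤ)^7*((q:ℤ)^(n-4))^2 - (q:ℤ)^6*((q:ℤ)^(n-4))*s - (q:ℤ)^6*((q:ℤ)^(n-4))*(x₁:ℤ)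 + (q:ℤ)^6*((q:ℤ)^(n-4)) + (q:ℤ)^4*((q:ℤ)^(n-4))*(x₁:ℤ)) * hrel
    have hx2 : ((q:ℤ)^7*((q:ℤ)^(n-4))^2 - (q:ℤ)^5*((q:ℤ)^(n-4))^2) * (x₂:ℤ) = ((q:ℤ)^7*((q:ℤ)^(n-4))^2 - (q:ℤ)^5*((q:ℤ)^(n-4))^2) * ((q:ℤ)^5*((q:ℤ)^(n-4))*s - (q:ℤ)^4*((q:ℤ)^(n-4))*s + (q:ℤ)^3*((q:ℤ)^(n-4)) - (q:ℤ)^2*((q:ℤ)^(n-4))) := by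
      linear_combination e3 + (-2*(q:ℤ)^4*((q:ℤ)^(n-4))*s - (q:ℤ)^4*s - (q:ℤ)^2*((q:ℤ)^(n-4)) - (q:ℤ)^2*s - (q:ℤ)^2 - 1) * e2 + ((q:ℤ)^8*((q:ℤ)^(n-4))^2*s^2 + (q:ℤ)^8*((q:ℤ)^(n-4))*s^2 + (q:ℤ)^6*((q:ℤ)^(n-4))^2*s + (q:ℤ)^6*((q:ℤ)^(n-4))*s^2 + 2*(q:ℤ)^6*((q:ℤ)^(n-4))*s + (q:ℤ)^6*s^2 + 2*(q:ℤ)^4*((q:ℤ)^(n-4))*s + (q:ℤ)^4*((q:ℤ)^(n-4)) + 2*(q:ℤ)^4*s + (q:ℤ)^2*((q:ℤ)^(n-4)) + (q:ℤ)^2*s + (q:ℤ)^2 + 1) * e1 + ((q:ℤ)^10*((q:ℤ)^(n-4))^2*s - (q:ℤ)^8*((q:ℤ)^(n-4))^2*s + (q:ℤ)^8*((q:ℤ)^(n-4))^2 + (q:ℤ)^8*((q:ℤ)^(n-4))*s + (q:ℤ)^7*((q:ℤ)^(n-4))^2 - (q:ℤ)^6*((q:ℤ)^(n-4))^2 - (q:ℤ)^6*((q:ℤ)^(n-4))*s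 + (q:ℤ)^6*((q:ℤ)^(n-4))*(x₂:ℤ) + (q:ℤ)^6*((q:ℤ)^(n-4)) - (q:ℤ)^4*((q:ℤ)^(n-4))*(x₂:ℤ)) * hrel
    have hx3 : ((q:ℤ)^8*((q:ℤ)^(n-4))^2 - (q:ℤ)^7*((q:ℤ)^(n-4))^2 - (q:ℤ)^6*((q:ℤ)^(n-4))^2 + (q:ℤ)^5*((q:ℤ)^(n-4))^2) * (x₃:ℤ) = ((q:ℤ)^8*((q:ℤ)^(n-4))^2 - (q:ℤ)^7*((q:ℤ)^(n-4))^2 - (q:ℤ)^6*((q:ℤ)^(n-4))^2 + (q:ℤ)^5*((q:ℤ)^(n-4))^2) * ((q:ℤ)^4*((q:ℤ)^(n-4))*s + (q:ℤ)^2*((q:ℤ)^(n-4)) + (q:ℤ)^2*s + 1) := by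
      linear_combination e3 + (-2*(q:ℤ)^4*((q:ℤ)^(n-4))*s - (q:ℤ)^2*((q:ℤ)^(n-4)) - 2*(q:ℤ)^2*s - 1) * e2 + ((q:ℤ)^8*((q:ℤ)^(n-4))^2*s^2 + (q:ℤ)^6*((q:ℤ)^(n-4))^2*s + 2*(q:ℤ)^6*((q:ℤ)^(n-4))*s^2 + 3*(q:ℤ)^4*((q:ℤ)^(n-4))*s + (q:ℤ)^4*s^2 + (q:ℤ)^2*((q:ℤ)^(n-4)) + 2*(q:ℤ)^2*s + 1) * e1 + ((q:ℤ)^10*((q:ℤ)^(n-4))^2*s - (q:ℤ)^8*((q:ℤ)^(n-4))^2*s + (q:ℤ)^8*((q:ℤ)^(n-4))^2 + 2*(q:ℤ)^8*((q:ℤ)^(n-4))*s + (q:ℤ)^8*s*(x₃:ℤ) + (q:ℤ)^7*((q:ℤ)^(n-4))^2 + (q:ℤ)^7*((q:ℤ)^(n-4))*(x₃:ℤ) - (q:ℤ)^6*((q:ℤ)^(n-4))^2 - 2*(q:ℤ)^6*((q:ℤ)^(n-4))*s - (q:ℤ)^6*((q:ℤ)^(n-4))*(x₃:ℤ) + 2*(q:ℤ)^6*((q:ℤ)^(n-4))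 - 2*(q:ℤ)^6*s*(x₃:ℤ) + (q:ℤ)^6*s + (q:ℤ)^6*(x₃:ℤ) - (q:ℤ)^5*((q:ℤ)^(n-4))*(x₃:ℤ) + (q:ℤ)^5*((q:ℤ)^(n-4)) + (q:ℤ)^4*((q:ℤ)^(n-4))*(x₃:ℤ) - (q:ℤ)^4*((q:ℤ)^(n-4)) + (q:ℤ)^4*s*(x₃:ℤ) - (q:ℤ)^4*s - (q:ℤ)^4*(x₃:ℤ) + (q:ℤ)^4) * hrel
    have hk1ne : (-(q:ℤ)^7*((q:ℤ)^(n-4))^2 + (q:ℤ)^6*((q:ℤ)^(n-4))^2 + (q:ℤ)^5*((q:ℤ)^(n-4))^2 - (q:ℤ)^4*((q:ℤ)^(n-4))^2) ≠ 0 := by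
      intro h0
      have hcontra : (q:ℤ)^4 * ((q:ℤ)^(n-4))^2 * (((q:ℤ)-1) * (((q:ℤ)-1) * ((q:ℤ)+1))) = 0 := by
        linear_combination -h0
      exact absurd hcontra (ne_of_gt hpos2)
    have hk2ne : ((q:ℤ)^7*((q:ℤ)^(n-4))^2 - (q:ℤ)^5*((q:ℤ)^(n-4))^2) ≠ 0 := by
      intro h0
      have hcontra : (q:ℤ)^5 * ((q:ℤ)^(n-4))^2 * (((q:ℤ)-1) * ((q:ℤ)+1)) = 0 := by
        linear_combination h0
      exact absurd hcontra (ne_of_gt hpos3)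
    have hk3ne : ((q:ℤ)^8*((q:ℤ)^(n-4))^2 - (q:ℤ)^7*((q:ℤ)^(n-4))^2 - (q:ℤ)^6*((q:ℤ)^(n-4))^2 + (q:ℤ)^5*((q:ℤ)^(n-4))^2) ≠ 0 := by
      intro h0
      have hcontra : (q:ℤ)^5 * ((q:ℤ)^(n-4))^2 * (((q:ℤ)-1) * (((q:ℤ)-1) * ((q:ℤ)+1))) = 0 := by
        linear_combination h0
      exact absurd hcontra (ne_of_gt hpos4)
    have hval1 : (x₁:ℤ) = ((q:ℤ)^6*((q:ℤ)^(n-4))^2) := mul_left_cancel₀ hk1ne hx1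
    have hval2 : (x₂:ℤ) = ((q:ℤ)^5*((q:ℤ)^(n-4))*s - (q:ℤ)^4*((q:ℤ)^(n-4))*s + (q:ℤ)^3*((q:ℤ)^(n-4)) - (q:ℤ)^2*((q:ℤ)^(n-4))) := mul_left_cancel₀ hk2ne hx2
    have hval3 : (x₃:ℤ) = ((q:ℤ)^4*((q:ℤ)^(n-4))*s + (q:ℤ)^2*((q:ℤ)^(n-4)) + (q:ℤ)^2*s + 1) := mul_left_cancel₀ hk3ne hx3
    refine ⟨?_, ?_, ?_⟩
    · rw [hval1, hG1]; ring
    · rw [hval2, hε, hp1, hp2]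
      rw [show (q:ℤ)^2*(q:ℤ)^(n-4) * ((q:ℤ)^3*(q:ℤ)^(n-4) + -1) = ((q:ℤ)+1) * (((q:ℤ)^5*((q:ℤ)^(n-4))*s - (q:ℤ)^4*((q:ℤ)^(n-4))*s + (q:ℤ)^3*((q:ℤ)^(n-4)) - (q:ℤ)^2*((q:ℤ)^(n-4)))) from by
        linear_combination ((q:ℤ)^4*((q:ℤ)^(n-4))) * hrel]
      exact (Int.mul_ediv_cancel_left _ hQ1ne).symm
    · rw [hval3, hε, hp1, hp2]
      rw [show ((q:ℤ)^3*(q:ℤ)^(n-4) + -1) * ((q:ℤ)^2*(q:ℤ)^(n-4) - -1) = ((q:ℤ)^2-1) * (((q:ℤ)^4*((q:ℤ)^(n-4))*s + (q:ℤ)^2*((q:ℤ)^(n-4)) + (q:ℤ)^2*s + 1)) from by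
        linear_combination ((q:ℤ)^4*((q:ℤ)^(n-4)) + (q:ℤ)^2) * hrel]
      exact (Int.mul_ediv_cancel_left _ hEne).symm

lemma distinct_C (q n : ℕ) (hq : 2 < q) (hn : 4 ≤ n) (H₂ C₁ C₂ C₃ : ℕ)
    (hH₂ : (H₂ : ℤ) = 1 + (q : ℤ) ^ 2 * (((q : ℤ) ^ (n - 1) + (-1) ^ n) * ((q : ℤ) ^ (n - 2) - (-1) ^ n)) / ((q : ℤ) ^ 2 - 1))
    (hC₁ : (C₁ : ℤ) = ((q : ℤ) ^ (n - 1) + (-1) ^ n) * ((q : ℤ) ^ (n - 2) - (-1) ^ n) / ((q : ℤ) ^ 2 - 1))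
    (hC₂ : (C₂ : ℤ) = 1 + (q : ℤ) ^ 2 * (((q : ℤ) ^ (n - 2) - (-1) ^ n) * ((q : ℤ) ^ (n - 3) + (-1) ^ n)) / ((q : ℤ) ^ 2 - 1))
    (hC₃ : (C₃ : ℤ) = 1 + (q : ℤ) ^ 2 + (q : ℤ) ^ 4 * (((q : ℤ) ^ (n - 3) + (-1) ^ n) * ((q : ℤ) ^ (n - 4) - (-1) ^ n)) / ((q : ℤ) ^ 2 - 1)) :
    C₁ ≠ C₂ ∧ C₁ ≠ C₃ ∧ C₂ ≠ C₃ := by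
  have hY : (3 : ℤ) ≤ (q : ℤ) := by exact_mod_cast hq
  have hT1 : (1 : ℤ) ≤ (q : ℤ) ^ (n - 4) := one_le_pow₀ (by linarith)
  obtain ⟨s, hs0, hcase⟩ := setup_values q n hq hn H₂ C₁ C₂ C₃ hH₂ hC₁ hC₂ hC₃
  have hT2 : (q:ℤ)^2 * (q:ℤ)^(n-4) ≥ 9 := by nlinarith
  have hT3 : (q:ℤ)^3 * (q:ℤ)^(n-4) ≥ 27 := by nlinarith
  have hBA : (q:ℤ)^3 * (q:ℤ)^(n-4) ≥ 3 * ((q:ℤ)^2 * (q:ℤ)^(n-4)) := by nlinarith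
  rcases hcase with ⟨hε, hrel, hv1, hv2, hv3, hvH⟩ | ⟨hε, hrel, hv1, hv2, hv3, hvH⟩
  · have hd21 : (C₂:ℤ) - (C₁:ℤ) = (q:ℤ)^2 * (q:ℤ)^(n-4) := by
      rw [hv1, hv2]; linear_combination (-(q:ℤ)^2) * hrel
    have hd31 : (C₃:ℤ) - (C₁:ℤ) = (q:ℤ)^2 * (q:ℤ)^(n-4) - (q:ℤ)^3 * (q:ℤ)^(n-4) := by
      rw [hv1, hv3]; linear_combination (-(q:ℤ)^2) * hrel
    refine ⟨fun h => ?_, fun h => ?_, fun h => ?_⟩ <;>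
      · have hz : _ = _ := congrArg (fun t : ℕ => (t : ℤ)) h
        linarith [hd21, hd31, hz]
  · have hd21 : (C₂:ℤ) - (C₁:ℤ) = -((q:ℤ)^2 * (q:ℤ)^(n-4)) := by
      rw [hv1, hv2]; ring
    have hd31 : (C₃:ℤ) - (C₁:ℤ) = (q:ℤ)^3 * (q:ℤ)^(n-4) - (q:ℤ)^2 * (q:ℤ)^(n-4) := by
      rw [hv1, hv3]; linear_combination (-(q:ℤ)^2) * hrel
    refine ⟨fun h => ?_, fun h => ?_, fun h => ?_⟩ <;>
      · have hz : _ = _ := congrArg (fun t : ℕ => (t : ℤ)) h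
        linarith [hd21, hd31, hz]





theorem stmt_6
    (q n : ℕ) (hq : 2 < q) (hn : 4 ≤ n)
    (F : Type*) [Field F] [Fintype F] (hF : Fintype.card F = q ^ 2)
    (K : Set (Submodule F (Fin (n + 1) → F)))
    (hK : ∀ P ∈ K, Module.finrank F P = 1)
    (H₁ H₂ C₁ C₂ C₃ : ℕ)
    (hH₁ : (H₁ : ℤ) = ((q : ℤ) ^ n - (-1) ^ n) * ((q : ℤ) ^ (n - 1) + (-1) ^ n) / ((q : ℤ) ^ 2 - 1))
    (hH₂ : (H₂ : ℤ) = 1 + (q : ℤ) ^ 2 * (((q : ℤ) ^ (n - 1) + (-1) ^ n) * ((q : ℤ) ^ (n - 2) - (-1) ^ n)) / ((q : ℤ) ^ 2 - 1))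
    (hC₁ : (C₁ : ℤ) = ((q : ℤ) ^ (n - 1) + (-1) ^ n) * ((q : ℤ) ^ (n - 2) - (-1) ^ n) / ((q : ℤ) ^ 2 - 1))
    (hC₂ : (C₂ : ℤ) = 1 + (q : ℤ) ^ 2 * (((q : ℤ) ^ (n - 2) - (-1) ^ n) * ((q : ℤ) ^ (n - 3) + (-1) ^ n)) / ((q : ℤ) ^ 2 - 1))
    (hC₃ : (C₃ : ℤ) = 1 + (q : ℤ) ^ 2 + (q : ℤ) ^ 4 * (((q : ℤ) ^ (n - 3) + (-1) ^ n) * ((q : ℤ) ^ (n - 4) - (-1) ^ n)) / ((q : ℤ) ^ 2 - 1))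
    (hhyp : ∀ W : Submodule F (Fin (n + 1) → F), Module.finrank F W = n →
      {P | P ∈ K ∧ P ≤ W}.ncard = H₁ ∨ {P | P ∈ K ∧ P ≤ W}.ncard = H₂)
    (hcod2 : ∀ W : Submodule F (Fin (n + 1) → F), Module.finrank F W = n - 1 →
      {P | P ∈ K ∧ P ≤ W}.ncard = C₁ ∨ {P | P ∈ K ∧ P ≤ W}.ncard = C₂ ∨
      {P | P ∈ K ∧ P ≤ W}.ncard = C₃)
    :
    ∀ W : Submodule F (Fin (n + 1) → F), Module.finrank F W = n →
      {P | P ∈ K ∧ P ≤ W}.ncard = H₂ →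
      (({S : Submodule F (Fin (n + 1) → F) | Module.finrank F S = n - 1 ∧ S ≤ W ∧ {P | P ∈ K ∧ P ≤ S}.ncard = C₁}.ncard : ℤ)) = (q : ℤ) ^ (2 * n - 2) ∧
      (({S : Submodule F (Fin (n + 1) → F) | Module.finrank F S = n - 1 ∧ S ≤ W ∧ {P | P ∈ K ∧ P ≤ S}.ncard = C₂}.ncard : ℤ)) =
        (q : ℤ) ^ (n - 2) * ((q : ℤ) ^ (n - 1) + (-1) ^ n) / ((q : ℤ) + 1) ∧
      (({S : Submodule F (Fin (n + 1) → F) | Module.finrank F S = n - 1 ∧ S ≤ W ∧ {P | P ∈ K ∧ P ≤ S}.ncard = C₃}.ncard : ℤ)) =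
        ((q : ℤ) ^ (n - 1) + (-1) ^ n) * ((q : ℤ) ^ (n - 2) - (-1) ^ n) / ((q : ℤ) ^ 2 - 1) := by
  classical
  intro W hW htan
  obtain ⟨h12, h13, h23⟩ := distinct_C q n hq hn H₂ C₁ C₂ C₃ hH₂ hC₁ hC₂ hC₃
  set V := (Fin (n + 1) → F)
  haveI : Finite (Submodule F V) :=
    Finite.of_injective (fun S => (S : Set V)) SetLike.coe_injective
  set Q := Fintype.card F with hQdef
  have hQ : Q = q ^ 2 := hF
  have hQ9 : 9 ≤ Q := by rw [hQ]; nlinarith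
  -- finsets
  have hSfin : {S : Submodule F V | S ≤ W ∧ finrank F S = n - 1}.Finite := Set.toFinite _
  have hKWfin : {P : Submodule F V | P ∈ K ∧ P ≤ W}.Finite := Set.toFinite _
  set SF : Finset (Submodule F V) := hSfin.toFinset with hSFdef
  set KW : Finset (Submodule F V) := hKWfin.toFinset with hKWdef
  have hKWcard : KW.card = H₂ := by
    rw [hKWdef, ← Set.ncard_eq_toFinset_card _ hKWfin]; exact htan
  -- the total count of hyperplanes of W
  have hSFcard : Q ^ n - 1 = (Q - 1) * SF.card := by
    have h := count_hyperplanes (F := F) W ⊥ bot_le n 0 hW (finrank_bot F V) (by omega)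
    rw [Nat.sub_zero] at h
    have hseteq : {S : Submodule F V | S ≤ W ∧ finrank F S = n - 1 ∧ (⊥ : Submodule F V) ≤ S}
        = ↑SF := by
      ext S; simp [hSFdef, Set.Finite.mem_toFinset]
    rw [hseteq, Set.ncard_coe_finset] at h
    exact h
  -- counts through one point
  have hNP : ∀ P ∈ KW, Q ^ (n - 1) - 1 = (Q - 1) * (SF.filter (fun S => P ≤ S)).card := by
    intro P hP
    rw [hKWdef, Set.Finite.mem_toFinset] at hP
    obtain ⟨hPK, hPW⟩ := hP
    have h := count_hyperplanes (F := F) W P hPW n 1 hW (hK P hPK) (by omega)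
    have hseteq : {S : Submodule F V | S ≤ W ∧ finrank F S = n - 1 ∧ P ≤ S}
        = ↑(SF.filter (fun S => P ≤ S)) := by
      ext S
      simp only [hSFdef, Finset.coe_filter, Set.Finite.mem_toFinset, Set.mem_setOf_eq,
        Set.mem_sep_iff]
      tauto
    rw [hseteq, Set.ncard_coe_finset] at h
    exact h
  -- counts through two points
  have hNPP : ∀ P P' : Submodule F V, P ∈ K → P ≤ W → P' ∈ K → P' ≤ W → P ≠ P' →
      Q ^ (n - 2) - 1 = (Q - 1) * (SF.filter (fun S => P ≤ S ∧ P' ≤ S)).card := by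
    intro P P' hPK hPW hP'K hP'W hPP'
    have hsup_le : P ⊔ P' ≤ W := sup_le hPW hP'W
    have hinf : P ⊓ P' = ⊥ := by
      by_contra hib
      have h2 : P ⊓ P' = P := Submodule.eq_of_le_of_finrank_le inf_le_left
        (by
          rw [hK P hPK]
          by_contra hc
          push_neg at hc
          exact hib (Submodule.finrank_eq_zero.mp (by omega)))
      have h3 : P ≤ P' := h2 ▸ inf_le_right
      exact hPP' (Submodule.eq_of_le_of_finrank_le h3 (by rw [hK P hPK, hK P' hP'K]))
    have hfr2 : finrank F ↥(P ⊔ P') = 2 := by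
      have h := Submodule.finrank_sup_add_finrank_inf_eq P P'
      rw [hinf, finrank_bot, hK P hPK, hK P' hP'K] at h
      omega
    have h := count_hyperplanes (F := F) W (P ⊔ P') hsup_le n 2 hW hfr2 (by omega)
    have hseteq : {S : Submodule F V | S ≤ W ∧ finrank F S = n - 1 ∧ P ⊔ P' ≤ S}
        = ↑(SF.filter (fun S => P ≤ S ∧ P' ≤ S)) := by
      ext S
      simp only [hSFdef, Finset.coe_filter, Set.Finite.mem_toFinset, Set.mem_setOf_eq,
        Set.mem_sep_iff, sup_le_iff]
      tauto
    rw [hseteq, Set.ncard_coe_finset] at h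
    exact h
  -- counting K-points inside S via KW
  have hcnt : ∀ S ∈ SF, {P | P ∈ K ∧ P ≤ S}.ncard = (KW.filter (fun P => P ≤ S)).card := by
    intro S hS
    rw [hSFdef, Set.Finite.mem_toFinset] at hS
    have hseteq : {P : Submodule F V | P ∈ K ∧ P ≤ S} = ↑(KW.filter (fun P => P ≤ S)) := by
      ext P
      simp only [hKWdef, Finset.coe_filter, Set.Finite.mem_toFinset, Set.mem_setOf_eq,
        Set.mem_sep_iff]
      constructor
      · rintro ⟨h1, h2⟩; exact ⟨⟨h1, h2.trans hS.1⟩, h2⟩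
      · rintro ⟨⟨h1, _⟩, h2⟩; exact ⟨h1, h2⟩
    rw [hseteq, Set.ncard_coe_finset]
  -- partition of SF
  set f1 : Finset (Submodule F V) := SF.filter (fun S => {P | P ∈ K ∧ P ≤ S}.ncard = C₁) with hf1def
  set f2 : Finset (Submodule F V) := SF.filter (fun S => {P | P ∈ K ∧ P ≤ S}.ncard = C₂) with hf2def
  set f3 : Finset (Submodule F V) := SF.filter (fun S => {P | P ∈ K ∧ P ≤ S}.ncard = C₃) with hf3def
  have hunion : SF = (f1 ∪ f2) ∪ f3 := by
    ext S
    simp only [hf1def, hf2def, hf3def, Finset.mem_union, Finset.mem_filter]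
    constructor
    · intro hS
      have hS' := hS
      rw [hSFdef, Set.Finite.mem_toFinset] at hS'
      rcases hcod2 S hS'.2 with h | h | h
      · exact Or.inl (Or.inl ⟨hS, h⟩)
      · exact Or.inl (Or.inr ⟨hS, h⟩)
      · exact Or.inr ⟨hS, h⟩
    · rintro ((⟨h, _⟩ | ⟨h, _⟩) | ⟨h, _⟩) <;> exact h
  have hd12 : Disjoint f1 f2 := by
    rw [Finset.disjoint_left]
    intro S hS1 hS2
    rw [hf1def, Finset.mem_filter] at hS1
    rw [hf2def, Finset.mem_filter] at hS2
    exact h12 (hS1.2.symm.trans hS2.2)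
  have hd123 : Disjoint (f1 ∪ f2) f3 := by
    rw [Finset.disjoint_union_left]
    constructor <;> rw [Finset.disjoint_left] <;> intro S hS1 hS2 <;>
      rw [Finset.mem_filter] at hS1 <;> rw [hf3def, Finset.mem_filter] at hS2
    · exact h13 (hS1.2.symm.trans hS2.2)
    · exact h23 (hS1.2.symm.trans hS2.2)
  have hkey : ∀ g : ℕ → ℕ, ∑ S ∈ SF, g ({P | P ∈ K ∧ P ≤ S}.ncard)
      = g C₁ * f1.card + g C₂ * f2.card + g C₃ * f3.card := by
    intro g
    rw [hunion, Finset.sum_union hd123, Finset.sum_union hd12]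
    have e1 : ∑ S ∈ f1, g ({P | P ∈ K ∧ P ≤ S}.ncard) = g C₁ * f1.card := by
      rw [Finset.sum_congr rfl (fun S hS => by
        rw [(Finset.mem_filter.1 hS).2]), Finset.sum_const, smul_eq_mul, mul_comm]
    have e2 : ∑ S ∈ f2, g ({P | P ∈ K ∧ P ≤ S}.ncard) = g C₂ * f2.card := by
      rw [Finset.sum_congr rfl (fun S hS => by
        rw [(Finset.mem_filter.1 hS).2]), Finset.sum_const, smul_eq_mul, mul_comm]
    have e3 : ∑ S ∈ f3, g ({P | P ∈ K ∧ P ≤ S}.ncard) = g C₃ * f3.card := by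
      rw [Finset.sum_congr rfl (fun S hS => by
        rw [(Finset.mem_filter.1 hS).2]), Finset.sum_const, smul_eq_mul, mul_comm]
    rw [e1, e2, e3]
  -- double counting: sum of counts
  have hsum1 : ∑ S ∈ SF, (KW.filter (fun P => P ≤ S)).card
      = ∑ P ∈ KW, (SF.filter (fun S => P ≤ S)).card := by
    simp_rw [Finset.card_filter]
    rw [Finset.sum_comm]
  have he2 : (Q - 1) * ∑ S ∈ SF, {P | P ∈ K ∧ P ≤ S}.ncard = H₂ * (Q ^ (n - 1) - 1) := by
    rw [Finset.sum_congr rfl hcnt, hsum1, Finset.mul_sum]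
    rw [Finset.sum_congr rfl (fun P hP => (hNP P hP).symm), Finset.sum_const, smul_eq_mul,
      hKWcard]
  -- double counting: pairs
  have hoffd : ∀ S ∈ SF, (KW.filter (fun P => P ≤ S)).offDiag
      = KW.offDiag.filter (fun pp => pp.1 ≤ S ∧ pp.2 ≤ S) := by
    intro S _
    ext ⟨a, b⟩
    simp only [Finset.mem_offDiag, Finset.mem_filter]
    tauto
  have hsum2 : ∑ S ∈ SF, (KW.offDiag.filter (fun pp => pp.1 ≤ S ∧ pp.2 ≤ S)).card
      = ∑ pp ∈ KW.offDiag, (SF.filter (fun S => pp.1 ≤ S ∧ pp.2 ≤ S)).card := by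
    simp_rw [Finset.card_filter]
    rw [Finset.sum_comm]
  have he3 : (Q - 1) * ∑ S ∈ SF, ({P | P ∈ K ∧ P ≤ S}.ncard * {P | P ∈ K ∧ P ≤ S}.ncard
      - {P | P ∈ K ∧ P ≤ S}.ncard) = (H₂ * H₂ - H₂) * (Q ^ (n - 2) - 1) := by
    have hstep : ∀ S ∈ SF, {P | P ∈ K ∧ P ≤ S}.ncard * {P | P ∈ K ∧ P ≤ S}.ncard
        - {P | P ∈ K ∧ P ≤ S}.ncard
        = (KW.offDiag.filter (fun pp => pp.1 ≤ S ∧ pp.2 ≤ S)).card := by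
      intro S hS
      rw [hcnt S hS, ← Finset.offDiag_card, hoffd S hS]
    rw [Finset.sum_congr rfl hstep, hsum2, Finset.mul_sum]
    have hpp : ∀ pp ∈ KW.offDiag, (Q - 1) * (SF.filter (fun S => pp.1 ≤ S ∧ pp.2 ≤ S)).card
        = Q ^ (n - 2) - 1 := by
      intro pp hpp
      rw [Finset.mem_offDiag] at hpp
      obtain ⟨h1, h2, h3⟩ := hpp
      rw [hKWdef, Set.Finite.mem_toFinset] at h1 h2
      exact (hNPP pp.1 pp.2 h1.1 h1.2 h2.1 h2.2 h3).symm
    rw [Finset.sum_congr rfl hpp, Finset.sum_const, smul_eq_mul, Finset.offDiag_card, hKWcard]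
  -- assemble the natural-number equations
  set x1 : ℕ := f1.card with hx1def
  set x2 : ℕ := f2.card with hx2def
  set x3 : ℕ := f3.card with hx3def
  have e1ℕ : (Q - 1) * (x1 + x2 + x3) = Q ^ n - 1 := by
    have h := hkey (fun _ => 1)
    simp only [one_mul] at h
    rw [Finset.sum_const, smul_eq_mul, mul_one] at h
    rw [← h]
    exact hSFcard.symm
  have e2ℕ : (Q - 1) * (C₁ * x1 + C₂ * x2 + C₃ * x3) = H₂ * (Q ^ (n - 1) - 1) := by
    have h := hkey (fun c => c)
    rw [← he2, h]
  have e3ℕ : (Q - 1) * ((C₁ * C₁ - C₁) * x1 + (C₂ * C₂ - C₂) * x2 + (C₃ * C₃ - C₃) * x3)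
      = (H₂ * H₂ - H₂) * (Q ^ (n - 2) - 1) := by
    have h := hkey (fun c => c * c - c)
    rw [← he3, h]
  -- cast to ℤ
  have hccast : ∀ c : ℕ, ((c * c - c : ℕ) : ℤ) = (c : ℤ) ^ 2 - (c : ℤ) := by
    intro c
    rcases Nat.eq_zero_or_pos c with h | h
    · simp [h]
    · rw [Nat.cast_sub (Nat.le_mul_of_pos_left c h)]
      push_cast; ring
  have hQc : ((Q - 1 : ℕ) : ℤ) = (q : ℤ) ^ 2 - 1 := by
    rw [Nat.cast_sub (by omega)]
    rw [hQ]; push_cast; ring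
  have hQpow : ∀ m : ℕ, ((Q ^ m - 1 : ℕ) : ℤ) = (q : ℤ) ^ (2 * m) - 1 := by
    intro m
    rw [Nat.cast_sub (Nat.one_le_pow _ _ (by omega))]
    rw [hQ]; push_cast
    rw [← pow_mul]
  have E1 : ((q:ℤ)^2 - 1) * ((x1:ℤ) + (x2:ℤ) + (x3:ℤ)) = (q:ℤ)^(2*n) - 1 := by
    rw [← hQc, ← hQpow n]
    exact_mod_cast e1ℕ
  have E2 : ((q:ℤ)^2 - 1) * ((C₁:ℤ)*(x1:ℤ) + (C₂:ℤ)*(x2:ℤ) + (C₃:ℤ)*(x3:ℤ))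
      = (H₂:ℤ) * ((q:ℤ)^(2*(n-1)) - 1) := by
    rw [← hQc, ← hQpow (n-1)]
    exact_mod_cast e2ℕ
  have E3 : ((q:ℤ)^2 - 1) * (((C₁:ℤ)^2 - (C₁:ℤ))*(x1:ℤ) + ((C₂:ℤ)^2 - (C₂:ℤ))*(x2:ℤ)
      + ((C₃:ℤ)^2 - (C₃:ℤ))*(x3:ℤ)) = ((H₂:ℤ)^2 - (H₂:ℤ)) * ((q:ℤ)^(2*(n-2)) - 1) := by
    rw [← hQc, ← hQpow (n-2), ← hccast C₁, ← hccast C₂, ← hccast C₃, ← hccast H₂]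
    exact_mod_cast e3ℕ
  obtain ⟨g1, g2, g3⟩ := alg_lemma q n hq hn H₂ C₁ C₂ C₃ hH₂ hC₁ hC₂ hC₃ x1 x2 x3 E1 E2 E3
  have hgoalset : ∀ c : ℕ, {S : Submodule F V | finrank F S = n - 1 ∧ S ≤ W
      ∧ {P | P ∈ K ∧ P ≤ S}.ncard = c}.ncard
      = (SF.filter (fun S => {P | P ∈ K ∧ P ≤ S}.ncard = c)).card := by
    intro c
    have hseteq : {S : Submodule F V | finrank F S = n - 1 ∧ S ≤ W
        ∧ {P | P ∈ K ∧ P ≤ S}.ncard = c}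
        = ↑(SF.filter (fun S => {P | P ∈ K ∧ P ≤ S}.ncard = c)) := by
      ext S
      simp only [hSFdef, Finset.coe_filter, Set.Finite.mem_toFinset, Set.mem_setOf_eq,
        Set.mem_sep_iff]
      tauto
    rw [hseteq, Set.ncard_coe_finset]
  refine ⟨?_, ?_, ?_⟩
  · rw [hgoalset C₁]; exact g1
  · rw [hgoalset C₂]; exact g2
  · rw [hgoalset C₃]; exact g3
end

section
/- Under the hyperbolic hypotheses, through a codimension-2 subspace meeting K in C₁ points there pass exactly 0 tangent hyperplanes, through one meeting K in C₂ points exactly 1, through one meeting K in C₃ points exactly 2, and through one meeting K in C₄ points exactly q+1 tangent hyperplanes. -/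
open Module Submodule


lemma lines_count (F : Type*) [Field F] [Fintype F] (q : ℕ) (hF : Fintype.card F = q)
    (hq : 2 < q) (Q : Type*) [AddCommGroup Q] [Module F Q] [Finite Q]
    (h2 : Module.finrank F Q = 2) :
    {L : Submodule F Q | Module.finrank F L = 1}.ncard = q + 1 := by
  classical
  haveI : Fintype Q := Fintype.ofFinite Q
  haveI : FiniteDimensional F Q := Module.finite_iff_finite.mpr ‹_›
  haveI : Finite (Submodule F Q) := Finite.of_injective _ SetLike.coe_injective
  haveI : Fintype (Submodule F Q) := Fintype.ofFinite _
  set s : Finset Q := Finset.univ.erase 0 with hs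
  set t : Finset (Submodule F Q) := Finset.univ.filter (fun L => finrank F L = 1) with ht
  have hmap : ∀ v ∈ s, span F {v} ∈ t := by
    intro v hv
    simp only [ht, Finset.mem_filter, Finset.mem_univ, true_and]
    exact finrank_span_singleton (Finset.ne_of_mem_erase hv)
  have hsum := Finset.card_eq_sum_card_fiberwise hmap
  -- each fiber has card q - 1
  have hfiber : ∀ L ∈ t, (s.filter (fun v => span F {v} = L)).card = q - 1 := by
    intro L hL
    have hL1 : finrank F L = 1 := by simpa [ht] using hL
    have : s.filter (fun v => span F {v} = L) = (Finset.univ.filter (· ∈ L)).erase 0 := by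
      ext v
      simp only [hs, Finset.mem_filter, Finset.mem_erase, Finset.mem_univ, and_true, true_and]
      constructor
      · rintro ⟨hv0, rfl⟩
        exact ⟨hv0, subset_span rfl⟩
      · rintro ⟨hv0, hvL⟩
        refine ⟨hv0, Submodule.eq_of_le_of_finrank_eq ?_ ?_⟩
        · rwa [span_le, Set.singleton_subset_iff]
        · rw [hL1, finrank_span_singleton hv0]
    rw [this, Finset.card_erase_of_mem (by simp [L.zero_mem]),
      ← Fintype.card_subtype, ← Nat.card_eq_fintype_card]
    have : Nat.card {x // x ∈ L} = q := by
      haveI : Fintype L := Fintype.ofFinite _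
      rw [Nat.card_eq_fintype_card, card_eq_pow_finrank (K := F) (V := L), hL1, pow_one, hF]
    rw [this]
  rw [Finset.sum_congr rfl hfiber, Finset.sum_const, smul_eq_mul] at hsum
  have hscard : s.card = q ^ 2 - 1 := by
    rw [hs, Finset.card_erase_of_mem (Finset.mem_univ 0), Finset.card_univ,
      card_eq_pow_finrank (K := F) (V := Q), h2, hF]
  rw [hscard] at hsum
  have htcard : t.card = q + 1 := by
    have h1 : q ^ 2 - 1 = (q + 1) * (q - 1) := by
      obtain ⟨k, rfl⟩ : ∃ k, q = k + 3 := ⟨q - 3, by omega⟩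
      have h2 : (k + 3) ^ 2 = k * k + 6 * k + 9 := by ring
      have h3 : (k + 3 + 1) * (k + 3 - 1) = k * k + 6 * k + 8 := by
        have : k + 3 - 1 = k + 2 := by omega
        rw [this]; ring
      omega
    have := hsum.symm.trans h1
    exact Nat.eq_of_mul_eq_mul_right (by omega) this
  have : {L : Submodule F Q | Module.finrank F L = 1} = ↑t := by
    ext L; simp [ht]
  rw [this, Set.ncard_coe_finset, htcard]


lemma finrank_map_mkQ (F V : Type*) [Field F] [AddCommGroup V] [Module F V]
    [FiniteDimensional F V] (S W : Submodule F V) (hSW : S ≤ W) :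
    finrank F (W.map S.mkQ) + finrank F S = finrank F W := by
  have h1 : LinearMap.range (S.mkQ.comp W.subtype) = W.map S.mkQ := by
    rw [LinearMap.range_comp, Submodule.range_subtype]
  have h2 : LinearMap.ker (S.mkQ.comp W.subtype) = S.comap W.subtype := by
    rw [LinearMap.ker_comp, Submodule.ker_mkQ]
  have h3 := LinearMap.finrank_range_add_finrank_ker (S.mkQ.comp W.subtype)
  rw [h1, h2, (Submodule.comapSubtypeEquivOfLe hSW).finrank_eq] at h3
  exact h3

lemma hyperplanes_through (F V : Type*) [Field F] [Fintype F] [AddCommGroup V] [Module F V]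
    [Finite V] (q : ℕ) (hF : Fintype.card F = q) (hq : 2 < q)
    (r : ℕ) (hV : finrank F V = r + 2) (S : Submodule F V) (hS : finrank F S = r) :
    {W : Submodule F V | finrank F W = r + 1 ∧ S ≤ W}.ncard = q + 1 := by
  haveI : FiniteDimensional F V := Module.finite_iff_finite.mpr ‹_›
  haveI : Finite (V ⧸ S) := Quotient.finite _
  have hQ2 : finrank F (V ⧸ S) = 2 := by
    have := S.finrank_quotient_add_finrank
    omega
  have key : (Submodule.map S.mkQ) '' {W : Submodule F V | finrank F W = r + 1 ∧ S ≤ W}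
      = {L : Submodule F (V ⧸ S) | finrank F L = 1} := by
    ext L
    constructor
    · rintro ⟨W, ⟨hW, hSW⟩, rfl⟩
      have := finrank_map_mkQ F V S W hSW
      simp only [Set.mem_setOf_eq]
      omega
    · rintro hL
      refine ⟨L.comap S.mkQ, ⟨?_, ?_⟩, ?_⟩
      · have hle : S ≤ L.comap S.mkQ := by
          intro x hx
          simp [Submodule.mem_comap, Submodule.mkQ_apply,
            (Submodule.Quotient.mk_eq_zero S).2 hx]
        have hmc : (L.comap S.mkQ).map S.mkQ = L :=
          Submodule.map_comap_eq_of_surjective S.mkQ_surjective L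
        have := finrank_map_mkQ F V S (L.comap S.mkQ) hle
        rw [hmc, hL] at this
        omega
      · intro x hx
        simp [Submodule.mem_comap, Submodule.mkQ_apply,
          (Submodule.Quotient.mk_eq_zero S).2 hx]
      · exact Submodule.map_comap_eq_of_surjective S.mkQ_surjective L
  have hinj : Set.InjOn (Submodule.map S.mkQ) {W : Submodule F V | finrank F W = r + 1 ∧ S ≤ W} := by
    rintro W₁ ⟨_, h₁⟩ W₂ ⟨_, h₂⟩ h
    have e1 : (W₁.map S.mkQ).comap S.mkQ = W₁ := by
      rw [Submodule.comap_map_eq, Submodule.ker_mkQ, sup_eq_left.2 h₁]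
    have e2 : (W₂.map S.mkQ).comap S.mkQ = W₂ := by
      rw [Submodule.comap_map_eq, Submodule.ker_mkQ, sup_eq_left.2 h₂]
    rw [← e1, ← e2, h]
  calc {W : Submodule F V | finrank F W = r + 1 ∧ S ≤ W}.ncard
      = ((Submodule.map S.mkQ) '' {W : Submodule F V | finrank F W = r + 1 ∧ S ≤ W}).ncard :=
        (Set.ncard_image_of_injOn hinj).symm
    _ = q + 1 := by
        rw [key]
        exact lines_count F q hF hq (V ⧸ S) hQ2

lemma master (F V : Type*) [Field F] [Fintype F] [AddCommGroup V] [Module F V]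
    [Finite V] (q : ℕ) (hF : Fintype.card F = q) (hq : 2 < q)
    (r : ℕ) (hV : finrank F V = r + 2)
    (K : Set (Submodule F V)) (hK : ∀ P ∈ K, finrank F P = 1)
    (H₁ H₂ : ℕ) (hne : H₁ ≠ H₂)
    (hhyp : ∀ W : Submodule F V, finrank F W = r + 1 →
      {P | P ∈ K ∧ P ≤ W}.ncard = H₁ ∨ {P | P ∈ K ∧ P ≤ W}.ncard = H₂)
    (S : Submodule F V) (hS : finrank F S = r) :
    ∃ t u : ℕ,
      {W : Submodule F V | finrank F W = r + 1 ∧ S ≤ W ∧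
        {P | P ∈ K ∧ P ≤ W}.ncard = H₂}.ncard = t ∧
      t + u = q + 1 ∧
      t * H₂ + u * H₁ = K.ncard + q * {P | P ∈ K ∧ P ≤ S}.ncard := by
  classical
  haveI : FiniteDimensional F V := Module.finite_iff_finite.mpr ‹_›
  haveI : Finite (Submodule F V) := Finite.of_injective _ SetLike.coe_injective
  haveI : Fintype (Submodule F V) := Fintype.ofFinite _
  set KF : Finset (Submodule F V) := (Set.toFinite K).toFinset with hKF
  set WF : Finset (Submodule F V) :=
    Finset.univ.filter (fun W => finrank F W = r + 1 ∧ S ≤ W) with hWF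
  have hWFmem : ∀ W, W ∈ WF ↔ (finrank F W = r + 1 ∧ S ≤ W) := by
    intro W; simp [hWF]
  have hWFcard : WF.card = q + 1 := by
    have h := hyperplanes_through F V q hF hq r hV S hS
    have : {W : Submodule F V | finrank F W = r + 1 ∧ S ≤ W} = ↑WF := by
      ext W; simp [hWF]
    rwa [this, Set.ncard_coe_finset] at h
  -- counts as finset cards
  have hcount : ∀ W : Submodule F V, {P | P ∈ K ∧ P ≤ W}.ncard = (KF.filter (· ≤ W)).card := by
    intro W
    have : {P | P ∈ K ∧ P ≤ W} = ↑(KF.filter (· ≤ W)) := by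
      ext P; simp [hKF, Set.Finite.mem_toFinset]
    rw [this, Set.ncard_coe_finset]
  -- unique hyperplane through S and a point P ∉ S
  have huniq : ∀ P ∈ KF, ¬ P ≤ S → WF.filter (fun W => P ≤ W) = {S ⊔ P} := by
    intro P hP hPS
    have hP1 : finrank F P = 1 := hK P (by simpa [hKF] using hP)
    have hinf : finrank F (S ⊓ P : Submodule F V) = 0 := by
      have hle : finrank F (S ⊓ P : Submodule F V) ≤ 1 := by
        rw [← hP1]; exact Submodule.finrank_mono inf_le_right
      by_contra h
      have h1 : finrank F (S ⊓ P : Submodule F V) = 1 := by omega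
      have : (S ⊓ P : Submodule F V) = P :=
        Submodule.eq_of_le_of_finrank_eq inf_le_right (by rw [h1, hP1])
      exact hPS (this ▸ inf_le_left)
    have hsup : finrank F (S ⊔ P : Submodule F V) = r + 1 := by
      have := Submodule.finrank_sup_add_finrank_inf_eq S P
      rw [hinf, hS, hP1] at this
      omega
    ext W
    simp only [Finset.mem_filter, hWFmem, Finset.mem_singleton]
    constructor
    · rintro ⟨⟨hWr, hSW⟩, hPW⟩
      exact (Submodule.eq_of_le_of_finrank_eq (sup_le hSW hPW) (by rw [hsup, hWr])).symm
    · rintro rfl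
      exact ⟨⟨hsup, le_sup_left⟩, le_sup_right⟩
  have hall : ∀ P ∈ KF, P ≤ S → WF.filter (fun W => P ≤ W) = WF := by
    intro P hP hPS
    apply Finset.filter_true_of_mem
    intro W hW
    exact hPS.trans ((hWFmem W).1 hW).2
  -- double count
  have hdc : ∑ W ∈ WF, (KF.filter (· ≤ W)).card
      = ∑ P ∈ KF, (WF.filter (fun W => P ≤ W)).card := by
    simp only [Finset.card_filter]
    rw [Finset.sum_comm]
  -- RHS evaluation
  have hrhs : ∑ P ∈ KF, (WF.filter (fun W => P ≤ W)).card
      = K.ncard + q * {P | P ∈ K ∧ P ≤ S}.ncard := by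
    rw [← Finset.sum_filter_add_sum_filter_not KF (· ≤ S)]
    have e1 : ∑ P ∈ KF.filter (· ≤ S), (WF.filter (fun W => P ≤ W)).card
        = (KF.filter (· ≤ S)).card * (q + 1) := by
      rw [Finset.sum_congr rfl (fun P hP => by
        rw [hall P (Finset.mem_of_mem_filter P hP) (Finset.mem_filter.1 hP).2, hWFcard]),
        Finset.sum_const, smul_eq_mul]
    have e2 : ∑ P ∈ KF.filter (¬ · ≤ S), (WF.filter (fun W => P ≤ W)).card
        = (KF.filter (¬ · ≤ S)).card := by
      rw [Finset.sum_congr rfl (fun P hP => by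
        rw [huniq P (Finset.mem_of_mem_filter P hP) (Finset.mem_filter.1 hP).2,
          Finset.card_singleton]), Finset.sum_const, smul_eq_mul, mul_one]
    rw [e1, e2, hcount S]
    have hsplit : (KF.filter (· ≤ S)).card + (KF.filter (¬ · ≤ S)).card = KF.card :=
      Finset.card_filter_add_card_filter_not _
    have hk : KF.card = K.ncard := (Set.ncard_eq_toFinset_card K (Set.toFinite K)).symm
    ring_nf
    omega
  -- LHS evaluation
  set t := (WF.filter (fun W => (KF.filter (· ≤ W)).card = H₂)).card with hT
  set u := (WF.filter (fun W => ¬ (KF.filter (· ≤ W)).card = H₂)).card with hU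
  have hlhs : ∑ W ∈ WF, (KF.filter (· ≤ W)).card = t * H₂ + u * H₁ := by
    rw [← Finset.sum_filter_add_sum_filter_not WF (fun W => (KF.filter (· ≤ W)).card = H₂)]
    have e1 : ∑ W ∈ WF.filter (fun W => (KF.filter (· ≤ W)).card = H₂),
        (KF.filter (· ≤ W)).card = t * H₂ := by
      rw [Finset.sum_congr rfl (fun W hW => (Finset.mem_filter.1 hW).2),
        Finset.sum_const, smul_eq_mul]
    have e2 : ∑ W ∈ WF.filter (fun W => ¬ (KF.filter (· ≤ W)).card = H₂),
        (KF.filter (· ≤ W)).card = u * H₁ := by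
      rw [Finset.sum_congr rfl (fun W hW => ?_), Finset.sum_const, smul_eq_mul]
      have hWr := ((hWFmem W).1 (Finset.mem_of_mem_filter W hW)).1
      have hne2 := (Finset.mem_filter.1 hW).2
      rcases hhyp W hWr with h | h
      · rw [← hcount W]; exact h
      · exact absurd (by rw [← hcount W]; exact h) hne2
    rw [e1, e2]
  refine ⟨t, u, ?_, ?_, ?_⟩
  · have : {W : Submodule F V | finrank F W = r + 1 ∧ S ≤ W ∧
        {P | P ∈ K ∧ P ≤ W}.ncard = H₂}
        = ↑(WF.filter (fun W => (KF.filter (· ≤ W)).card = H₂)) := by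
      ext W
      simp only [Set.mem_setOf_eq, Finset.coe_filter, hWFmem, hcount W]
      tauto
    rw [this, Set.ncard_coe_finset]
  · rw [hT, hU, Finset.card_filter_add_card_filter_not, hWFcard]
  · rw [← hlhs, hdc, hrhs]

theorem stmt_9
    (q n : ℕ) (hq : 2 < q) (hn : 2 ≤ n)
    (F : Type*) [Field F] [Fintype F] (hF : Fintype.card F = q)
    (K : Set (Submodule F (Fin (2 * n + 2) → F)))
    (hK : ∀ P ∈ K, Module.finrank F P = 1)
    (H₁ H₂ C₁ C₂ C₃ C₄ : ℕ)
    (hH₁ : (H₁ : ℤ) = ((q : ℤ) ^ (2 * n) - 1) / ((q : ℤ) - 1))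
    (hH₂ : (H₂ : ℤ) = 1 + (q : ℤ) * (((q : ℤ) ^ n - 1) * ((q : ℤ) ^ (n - 1) + 1)) / ((q : ℤ) - 1))
    (hC₁ : (C₁ : ℤ) = ((q : ℤ) ^ n + 1) * ((q : ℤ) ^ (n - 1) - 1) / ((q : ℤ) - 1))
    (hC₂ : (C₂ : ℤ) = 1 + (q : ℤ) * ((q : ℤ) ^ (2 * n - 2) - 1) / ((q : ℤ) - 1))
    (hC₃ : (C₃ : ℤ) = ((q : ℤ) ^ n - 1) * ((q : ℤ) ^ (n - 1) + 1) / ((q : ℤ) - 1))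
    (hC₄ : (C₄ : ℤ) = 1 + (q : ℤ) + (q : ℤ) ^ 2 * (((q : ℤ) ^ (n - 1) - 1) * ((q : ℤ) ^ (n - 2) + 1)) / ((q : ℤ) - 1))
    (hhyp : ∀ W : Submodule F (Fin (2 * n + 2) → F), Module.finrank F W = 2 * n + 1 →
      {P | P ∈ K ∧ P ≤ W}.ncard = H₁ ∨ {P | P ∈ K ∧ P ≤ W}.ncard = H₂)
    (hcod2 : ∀ W : Submodule F (Fin (2 * n + 2) → F), Module.finrank F W = 2 * n →
      {P | P ∈ K ∧ P ≤ W}.ncard = C₁ ∨ {P | P ∈ K ∧ P ≤ W}.ncard = C₂ ∨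
      {P | P ∈ K ∧ P ≤ W}.ncard = C₃ ∨ {P | P ∈ K ∧ P ≤ W}.ncard = C₄)
    (hcard : (K.ncard : ℤ) = ((q : ℤ) ^ n + 1) * ((q : ℤ) ^ (n + 1) - 1) / ((q : ℤ) - 1))
    :
    ∀ S : Submodule F (Fin (2 * n + 2) → F), Module.finrank F S = 2 * n →
      ({P | P ∈ K ∧ P ≤ S}.ncard = C₁ → {W : Submodule F (Fin (2 * n + 2) → F) | Module.finrank F W = 2 * n + 1 ∧ S ≤ W ∧ {P | P ∈ K ∧ P ≤ W}.ncard = H₂}.ncard = 0) ∧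
      ({P | P ∈ K ∧ P ≤ S}.ncard = C₂ → {W : Submodule F (Fin (2 * n + 2) → F) | Module.finrank F W = 2 * n + 1 ∧ S ≤ W ∧ {P | P ∈ K ∧ P ≤ W}.ncard = H₂}.ncard = 1) ∧
      ({P | P ∈ K ∧ P ≤ S}.ncard = C₃ → {W : Submodule F (Fin (2 * n + 2) → F) | Module.finrank F W = 2 * n + 1 ∧ S ≤ W ∧ {P | P ∈ K ∧ P ≤ W}.ncard = H₂}.ncard = 2) ∧
      ({P | P ∈ K ∧ P ≤ S}.ncard = C₄ → {W : Submodule F (Fin (2 * n + 2) → F) | Module.finrank F W = 2 * n + 1 ∧ S ≤ W ∧ {P | P ∈ K ∧ P ≤ W}.ncard = H₂}.ncard = q + 1) := by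
  obtain ⟨m, rfl⟩ : ∃ m, n = m + 2 := ⟨n - 2, by omega⟩
  set V := Fin (2 * (m + 2) + 2) → F with hV
  set Q : ℤ := (q : ℤ) with hQdef
  have hQ3 : (3 : ℤ) ≤ Q := by
    have h3 : 3 ≤ q := hq
    rw [hQdef]
    exact_mod_cast h3
  have hQ1 : Q - 1 ≠ 0 := by omega
  -- exponent normalizations
  have e1 : m + 2 - 1 = m + 1 := rfl
  have e2 : m + 2 - 2 = m := rfl
  have e3 : 2 * (m + 2) = 2 * m + 4 := by ring
  have e4 : 2 * (m + 2) - 2 = 2 * m + 2 := by omega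
  rw [e3] at hH₁
  rw [e1] at hH₂ hC₁ hC₃ hC₄
  rw [e2] at hC₄
  rw [e4] at hC₂
  set a : ℤ := Q ^ m with hadef
  have ha1 : 1 ≤ a := one_le_pow₀ (by omega)
  have pm1 : Q ^ (m + 1) = a * Q := by rw [pow_succ]
  have pm2 : Q ^ (m + 2) = a * Q ^ 2 := by rw [pow_add]
  have pm3 : Q ^ (m + 3) = a * Q ^ 3 := by rw [pow_add]
  have p2m2 : Q ^ (2 * m + 2) = a ^ 2 * Q ^ 2 := by
    rw [show 2 * m + 2 = m + (m + 2) by ring, pow_add, pm2]; ring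
  have p2m4 : Q ^ (2 * m + 4) = a ^ 2 * Q ^ 4 := by
    rw [show 2 * m + 4 = m + (m + 4) by ring, pow_add, pow_add]; ring
  -- divisibility facts
  have dv : ∀ k : ℕ, (Q - 1) ∣ Q ^ k - 1 := fun k => by
    simpa using sub_dvd_pow_sub_pow Q 1 k
  -- cleared equations
  have EH₁ : (Q - 1) * (H₁ : ℤ) = a ^ 2 * Q ^ 4 - 1 := by
    rw [hH₁, Int.mul_ediv_cancel' (dv _), p2m4]
  have EH₂ : (Q - 1) * (H₂ : ℤ) = (Q - 1) + Q * ((a * Q ^ 2 - 1) * (a * Q + 1)) := by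
    have d2 : (Q - 1) ∣ Q * ((Q ^ (m + 2) - 1) * (Q ^ (m + 1) + 1)) :=
      ((dv (m + 2)).mul_right _).mul_left Q
    rw [hH₂, mul_add, mul_one, Int.mul_ediv_cancel' d2, pm1, pm2]
  have EC₁ : (Q - 1) * (C₁ : ℤ) = (a * Q ^ 2 + 1) * (a * Q - 1) := by
    have d2 : (Q - 1) ∣ (Q ^ (m + 2) + 1) * (Q ^ (m + 1) - 1) :=
      (dv (m + 1)).mul_left _
    rw [hC₁, Int.mul_ediv_cancel' d2, pm1, pm2]
  have EC₂ : (Q - 1) * (C₂ : ℤ) = (Q - 1) + Q * (a ^ 2 * Q ^ 2 - 1) := by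
    have d2 : (Q - 1) ∣ Q * (Q ^ (2 * m + 2) - 1) := (dv _).mul_left Q
    rw [hC₂, mul_add, mul_one, Int.mul_ediv_cancel' d2, p2m2]
  have EC₃ : (Q - 1) * (C₃ : ℤ) = (a * Q ^ 2 - 1) * (a * Q + 1) := by
    have d2 : (Q - 1) ∣ (Q ^ (m + 2) - 1) * (Q ^ (m + 1) + 1) :=
      (dv (m + 2)).mul_right _
    rw [hC₃, Int.mul_ediv_cancel' d2, pm1, pm2]
  have EC₄ : (Q - 1) * (C₄ : ℤ) = (Q - 1) * (1 + Q) + Q ^ 2 * ((a * Q - 1) * (a + 1)) := by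
    have d2 : (Q - 1) ∣ Q ^ 2 * ((Q ^ (m + 1) - 1) * (Q ^ m + 1)) :=
      ((dv (m + 1)).mul_right _).mul_left _
    rw [hC₄, mul_add, mul_add, mul_one, Int.mul_ediv_cancel' d2, pm1]
  have e5 : m + 2 + 1 = m + 3 := rfl
  rw [e5] at hcard
  have Ek : (Q - 1) * (K.ncard : ℤ) = (a * Q ^ 2 + 1) * (a * Q ^ 3 - 1) := by
    have d2 : (Q - 1) ∣ (Q ^ (m + 2) + 1) * (Q ^ (m + 3) - 1) := (dv (m + 3)).mul_left _
    rw [hcard, Int.mul_ediv_cancel' d2, pm2, pm3]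
  have hdiff : (H₂ : ℤ) - H₁ = a * Q ^ 2 :=
    mul_left_cancel₀ hQ1 (by linear_combination EH₂ - EH₁)
  have hposQ0 : (0 : ℤ) < a * Q ^ 2 := mul_pos (by omega) (pow_pos (by omega) 2)
  have hne : H₁ ≠ H₂ := by
    intro h
    rw [h, sub_self] at hdiff
    exact hposQ0.ne' hdiff.symm
  -- ambient dimension
  have hVr : finrank F V = 2 * (m + 2) + 2 := Module.finrank_fin_fun F
  have hposQ : (0 : ℤ) < a * Q ^ 2 := mul_pos (by omega) (pow_pos (by omega) 2)
  have haQ : a * Q ^ 2 ≠ 0 := hposQ.ne'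
  intro S hS
  obtain ⟨t, u, htset, htu, heq⟩ :=
    master F V q hF hq (2 * (m + 2)) hVr K hK H₁ H₂ hne hhyp S hS
  set c : ℕ := {P | P ∈ K ∧ P ≤ S}.ncard with hc
  have heqZ : (t : ℤ) * H₂ + (u : ℤ) * H₁ = (K.ncard : ℤ) + Q * c := by rw [hQdef]; exact_mod_cast heq
  have htuZ : (t : ℤ) + u = Q + 1 := by rw [hQdef]; exact_mod_cast htu
  have step1 : (t : ℤ) * (a * Q ^ 2) + (Q + 1) * (H₁ : ℤ) = (K.ncard : ℤ) + Q * c := by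
    linear_combination heqZ - (t : ℤ) * hdiff - (H₁ : ℤ) * htuZ
  have key : (t : ℤ) * (a * Q ^ 2) = Q * ((c : ℤ) - C₁) :=
    mul_left_cancel₀ hQ1 (by
      linear_combination (Q - 1) * step1 - (Q + 1) * EH₁ + Ek + Q * EC₁)
  have tval : ∀ v : ℤ, (c : ℤ) - C₁ = v * a * Q → (t : ℤ) = v := by
    intro v hv
    have : (t : ℤ) * (a * Q ^ 2) = v * (a * Q ^ 2) := by
      rw [key, hv]; ring
    exact mul_right_cancel₀ haQ this
  refine ⟨?_, ?_, ?_, ?_⟩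
  · intro hcc
    rw [htset]
    have : (c : ℤ) - C₁ = 0 * a * Q := by rw [hcc]; ring
    have := tval 0 this
    exact_mod_cast this
  · intro hcc
    rw [htset]
    have hd : (c : ℤ) - C₁ = 1 * a * Q := by
      rw [hcc]
      refine mul_left_cancel₀ hQ1 ?_
      linear_combination EC₂ - EC₁
    have := tval 1 hd
    exact_mod_cast this
  · intro hcc
    rw [htset]
    have hd : (c : ℤ) - C₁ = 2 * a * Q := by
      rw [hcc]
      refine mul_left_cancel₀ hQ1 ?_
      linear_combination EC₃ - EC₁
    have := tval 2 hd
    exact_mod_cast this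
  · intro hcc
    rw [htset]
    have hd : (c : ℤ) - C₁ = (Q + 1) * a * Q := by
      rw [hcc]
      refine mul_left_cancel₀ hQ1 ?_
      linear_combination EC₄ - EC₁
    have := tval (Q + 1) hd
    rw [hQdef] at this
    exact_mod_cast this
end

section
/- Under the elliptic hypotheses, the set K contains exactly |Q⁻(2n+1,q)| = (q^n−1)(q^{n+1}+1)/(q−1) points, and there are exactly |Q⁻(2n+1,q)| tangent hyperplanes (hyperplanes meeting K in H₂ points). -/
open Module Submodule Finset

section Counting

variable {F : Type*} [Field F] [Fintype F] {V : Type*} [AddCommGroup V] [Module F V]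
  [Fintype V]

lemma card_nonzero_mem (U : Submodule F V) [DecidableEq V]
    [DecidablePred (· ∈ U)] :
    (univ.filter (fun v => v ∈ U ∧ v ≠ 0)).card = Fintype.card F ^ Module.finrank F U - 1 := by
  classical
  haveI : Module.Finite F V := Module.finite_iff_finite.mpr inferInstance
  have h1 : univ.filter (fun v => v ∈ U ∧ v ≠ 0) = (univ.filter (fun v => v ∈ U)).erase 0 := by
    ext v
    simp [and_comm]
  rw [h1, Finset.card_erase_of_mem (by simp)]
  congr 1
  rw [← Fintype.card_subtype]
  have : Fintype.card {v : V // v ∈ U} = Fintype.card U := rfl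
  rw [this, card_eq_pow_finrank (K := F) (V := U)]

lemma card_points_le (U : Submodule F V) :
    (Fintype.card F - 1) *
      {L : Submodule F V | Module.finrank F L = 1 ∧ L ≤ U}.ncard
      = Fintype.card F ^ Module.finrank F U - 1 := by
  classical
  haveI : Module.Finite F V := Module.finite_iff_finite.mpr inferInstance
  haveI : Fintype (Submodule F V) := Fintype.ofFinite _
  set B : Finset (Submodule F V) :=
    univ.filter (fun L => Module.finrank F L = 1 ∧ L ≤ U) with hB
  have hncard : {L : Submodule F V | Module.finrank F L = 1 ∧ L ≤ U}.ncard = B.card := by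
    rw [hB, ← Set.ncard_coe_finset]
    congr 1
    ext L
    simp
  rw [hncard]
  set A : Finset V := univ.filter (fun v => v ∈ U ∧ v ≠ 0) with hA
  have hAcard : A.card = Fintype.card F ^ Module.finrank F U - 1 := card_nonzero_mem U
  have hfib : ∀ v ∈ A, (span F {v} : Submodule F V) ∈ B := by
    intro v hv
    simp only [hA, mem_filter, mem_univ, true_and] at hv
    simp only [hB, mem_filter, mem_univ, true_and]
    exact ⟨finrank_span_singleton hv.2, by rw [span_le, Set.singleton_subset_iff]; exact hv.1⟩
  have key := Finset.card_eq_sum_card_fiberwise hfib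
  have hfibcard : ∀ L ∈ B, (A.filter (fun v => span F {v} = L)).card
      = Fintype.card F - 1 := by
    intro L hL
    simp only [hB, mem_filter, mem_univ, true_and] at hL
    have heq : A.filter (fun v => span F {v} = L) = univ.filter (fun v => v ∈ L ∧ v ≠ 0) := by
      ext v
      simp only [hA, mem_filter, mem_univ, true_and, Finset.filter_filter]
      constructor
      · rintro ⟨⟨-, hv0⟩, hsp⟩
        exact ⟨hsp ▸ mem_span_singleton_self v, hv0⟩
      · rintro ⟨hvL, hv0⟩
        refine ⟨⟨hL.2 hvL, hv0⟩, ?_⟩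
        apply Submodule.eq_of_le_of_finrank_le
        · rw [span_le, Set.singleton_subset_iff]; exact hvL
        · rw [hL.1, finrank_span_singleton hv0]
    rw [heq, card_nonzero_mem L, hL.1, pow_one]
  rw [Finset.sum_congr rfl hfibcard, Finset.sum_const, smul_eq_mul] at key
  rw [mul_comm, ← key, hAcard]

lemma finrank_dualAnnihilator (U : Submodule F V) :
    Module.finrank F U.dualAnnihilator + Module.finrank F U = Module.finrank F V := by
  haveI : Module.Finite F V := Module.finite_iff_finite.mpr inferInstance
  rw [← LinearEquiv.finrank_eq (Subspace.quotEquivAnnihilator U)]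
  exact Submodule.finrank_quotient_add_finrank U

lemma card_hyperplanes_above (hV : 0 < Module.finrank F V) (U : Submodule F V) :
    (Fintype.card F - 1) *
      {W : Submodule F V | Module.finrank F W = Module.finrank F V - 1 ∧ U ≤ W}.ncard
      = Fintype.card F ^ (Module.finrank F V - Module.finrank F U) - 1 := by
  classical
  haveI : Module.Finite F V := Module.finite_iff_finite.mpr inferInstance
  haveI : Finite (Module.Dual F V) :=
    Finite.of_injective (fun f => (f : V → F)) DFunLike.coe_injective
  haveI : Fintype (Module.Dual F V) := Fintype.ofFinite _
  have himg : (fun W : Submodule F V => W.dualAnnihilator) ''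
      {W : Submodule F V | Module.finrank F W = Module.finrank F V - 1 ∧ U ≤ W}
      = {L : Submodule F (Module.Dual F V) |
          Module.finrank F L = 1 ∧ L ≤ U.dualAnnihilator} := by
    ext L
    simp only [Set.mem_image, Set.mem_setOf_eq]
    constructor
    · rintro ⟨W, ⟨hW1, hW2⟩, rfl⟩
      have h := finrank_dualAnnihilator (F := F) W
      constructor
      · omega
      · exact Submodule.dualAnnihilator_anti hW2
    · rintro ⟨hL1, hL2⟩
      refine ⟨L.dualCoannihilator, ⟨?_, ?_⟩, ?_⟩
      · have h := Subspace.finrank_add_finrank_dualCoannihilator_eq L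
        omega
      · exact (Submodule.le_dualAnnihilator_iff_le_dualCoannihilator).mp hL2
      · exact Subspace.dualCoannihilator_dualAnnihilator_eq
  have hbij : {W : Submodule F V | Module.finrank F W = Module.finrank F V - 1 ∧ U ≤ W}.ncard
      = {L : Submodule F (Module.Dual F V) |
          Module.finrank F L = 1 ∧ L ≤ U.dualAnnihilator}.ncard := by
    rw [← himg]
    exact (Set.ncard_image_of_injOn (fun W _ W' _ h => Subspace.dualAnnihilator_inj.mp h)).symm
  rw [hbij, card_points_le U.dualAnnihilator]
  have h := finrank_dualAnnihilator (F := F) U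
  have h2 : Module.finrank F U ≤ Module.finrank F V := U.finrank_le
  have h3 : Module.finrank F U.dualAnnihilator
      = Module.finrank F V - Module.finrank F U := by omega
  rw [h3]

end Counting

section Arith

lemma elliptic_prelim (q n : ℕ) (hq : 2 < q) (hn : 2 ≤ n) (H₁ H₂ : ℕ)
    (hH₁ : (H₁ : ℤ) = ((q : ℤ) ^ (2 * n) - 1) / ((q : ℤ) - 1))
    (hH₂ : (H₂ : ℤ) = 1 + (q : ℤ) * (((q : ℤ) ^ n + 1) * ((q : ℤ) ^ (n - 1) - 1)) / ((q : ℤ) - 1)) :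
    ∃ s : ℤ, 2 ≤ s ∧ (q : ℤ) * (q : ℤ) ^ (n - 1) = ((q : ℤ) - 1) * s + 1 ∧
      (H₁ : ℤ) = s * (((q : ℤ) - 1) * s + 2) ∧
      (H₂ : ℤ) = (H₁ : ℤ) - (q : ℤ) * (q : ℤ) ^ (n - 1) := by
  have hQ3 : (3 : ℤ) ≤ (q : ℤ) := by exact_mod_cast hq
  have hd0 : ((q : ℤ) - 1) ≠ 0 := by omega
  have hw1 : (1 : ℤ) ≤ (q : ℤ) ^ (n - 1) := one_le_pow₀ (by omega)
  have hun : (q : ℤ) ^ n = (q : ℤ) * (q : ℤ) ^ (n - 1) := by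
    have he : n - 1 + 1 = n := by omega
    conv_lhs => rw [← he, pow_succ']
  have hdvd : ∀ m : ℕ, ((q : ℤ) - 1) ∣ (q : ℤ) ^ m - 1 := fun m => by
    simpa using sub_dvd_pow_sub_pow (q : ℤ) 1 m
  have hH1d : (H₁ : ℤ) * ((q : ℤ) - 1) = (q : ℤ) ^ (2 * n) - 1 := by
    rw [hH₁]
    exact Int.ediv_mul_cancel (hdvd (2 * n))
  have hH2d : (H₂ : ℤ) * ((q : ℤ) - 1)
      = ((q : ℤ) - 1) + (q : ℤ) * (((q : ℤ) ^ n + 1) * ((q : ℤ) ^ (n - 1) - 1)) := by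
    rw [hH₂, add_mul, one_mul]
    congr 1
    exact Int.ediv_mul_cancel (((hdvd (n - 1)).mul_left ((q : ℤ) ^ n + 1)).mul_left (q : ℤ))
  have hp2n : (q : ℤ) ^ (2 * n) = ((q : ℤ) * (q : ℤ) ^ (n - 1)) * ((q : ℤ) * (q : ℤ) ^ (n - 1)) := by
    rw [two_mul, pow_add, hun]
  obtain ⟨s, hs⟩ := hdvd n
  rw [hun] at hs
  have hs'' : (q : ℤ) * (q : ℤ) ^ (n - 1) = ((q : ℤ) - 1) * s + 1 := by linear_combination hs
  refine ⟨s, ?_, hs'', ?_, ?_⟩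
  · have hq2n : (q : ℤ) ^ 2 ≤ (q : ℤ) ^ n := pow_le_pow_right₀ (by omega) hn
    have h3 : ((q : ℤ) - 1) * s = (q : ℤ) ^ n - 1 := by
      rw [hun]; linarith [hs]
    have hsq : ((q : ℤ) - 1) * ((q : ℤ) + 1) = (q : ℤ) ^ 2 - 1 := by ring
    have h2 : ((q : ℤ) - 1) * ((q : ℤ) + 1) ≤ ((q : ℤ) - 1) * s := by
      linarith
    have := le_of_mul_le_mul_left h2 (by omega : (0 : ℤ) < (q : ℤ) - 1)
    omega
  · apply mul_right_cancel₀ hd0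
    rw [hp2n, hs''] at hH1d
    linear_combination hH1d
  · apply mul_right_cancel₀ hd0
    rw [hH2d]
    rw [hp2n] at hH1d
    rw [hun]
    linear_combination (-1 : ℤ) * hH1d

lemma elliptic_ne (q n : ℕ) (hq : 2 < q) (hn : 2 ≤ n) (H₁ H₂ : ℕ)
    (hH₁ : (H₁ : ℤ) = ((q : ℤ) ^ (2 * n) - 1) / ((q : ℤ) - 1))
    (hH₂ : (H₂ : ℤ) = 1 + (q : ℤ) * (((q : ℤ) ^ n + 1) * ((q : ℤ) ^ (n - 1) - 1)) / ((q : ℤ) - 1)) :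
    H₁ ≠ H₂ := by
  obtain ⟨s, hs2, hs'', h1eq, hH2e⟩ := elliptic_prelim q n hq hn H₁ H₂ hH₁ hH₂
  have hQ3 : (3 : ℤ) ≤ (q : ℤ) := by exact_mod_cast hq
  have hw1 : (1 : ℤ) ≤ (q : ℤ) ^ (n - 1) := one_le_pow₀ (by omega)
  have hQw0 : (0 : ℤ) < (q : ℤ) * (q : ℤ) ^ (n - 1) :=
    mul_pos (by omega) (by omega)
  intro h
  have hcast : (H₁ : ℤ) = (H₂ : ℤ) := by exact_mod_cast h
  omega

lemma elliptic_arith (q n : ℕ) (hq : 2 < q) (hn : 2 ≤ n) (H₁ H₂ k aH tH NN : ℕ)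
    (hH₁ : (H₁ : ℤ) = ((q : ℤ) ^ (2 * n) - 1) / ((q : ℤ) - 1))
    (hH₂ : (H₂ : ℤ) = 1 + (q : ℤ) * (((q : ℤ) ^ n + 1) * ((q : ℤ) ^ (n - 1) - 1)) / ((q : ℤ) - 1))
    (hAT : aH + tH = NN)
    (hN : (q - 1) * NN = q ^ (2 * n + 2) - 1)
    (hsum1 : (q - 1) * (aH * H₁ + tH * H₂) = k * (q ^ (2 * n + 1) - 1))
    (hsum2 : (q - 1) * (aH * (H₁ * H₁) + tH * (H₂ * H₂)) + k * (q ^ (2 * n) - 1)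
      = k * (q ^ (2 * n + 1) - 1) + k * k * (q ^ (2 * n) - 1)) :
    (k : ℤ) = ((q : ℤ) ^ n - 1) * ((q : ℤ) ^ (n + 1) + 1) / ((q : ℤ) - 1) ∧
    (tH : ℤ) = ((q : ℤ) ^ n - 1) * ((q : ℤ) ^ (n + 1) + 1) / ((q : ℤ) - 1) := by
  obtain ⟨s, hs2, hs'', h1eq, hH2e⟩ := elliptic_prelim q n hq hn H₁ H₂ hH₁ hH₂
  have hQ3 : (3 : ℤ) ≤ (q : ℤ) := by exact_mod_cast hq
  have hd0 : ((q : ℤ) - 1) ≠ 0 := by omega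
  have hw1 : (1 : ℤ) ≤ (q : ℤ) ^ (n - 1) := one_le_pow₀ (by omega)
  have hun : (q : ℤ) ^ n = (q : ℤ) * (q : ℤ) ^ (n - 1) := by
    have he : n - 1 + 1 = n := by omega
    conv_lhs => rw [← he, pow_succ']
  have hp2n : (q : ℤ) ^ (2 * n) = ((q : ℤ) * (q : ℤ) ^ (n - 1)) * ((q : ℤ) * (q : ℤ) ^ (n - 1)) := by
    rw [two_mul, pow_add, hun]
  have hp2n1 : (q : ℤ) ^ (2 * n + 1)
      = ((q : ℤ) * (q : ℤ) ^ (n - 1)) * ((q : ℤ) * (q : ℤ) ^ (n - 1)) * (q : ℤ) := by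
    rw [pow_succ, hp2n]
  have hp2n2 : (q : ℤ) ^ (2 * n + 2)
      = ((q : ℤ) * (q : ℤ) ^ (n - 1)) * ((q : ℤ) * (q : ℤ) ^ (n - 1)) * (q : ℤ) * (q : ℤ) := by
    rw [show 2 * n + 2 = (2 * n + 1) + 1 from rfl, pow_succ, hp2n1]
  -- cast to ℤ
  have hq1 : 1 ≤ q := by omega
  have hpw0 : 1 ≤ q ^ (2 * n) := Nat.one_le_pow _ _ (by omega)
  have hpw1 : 1 ≤ q ^ (2 * n + 1) := Nat.one_le_pow _ _ (by omega)
  have hpw2 : 1 ≤ q ^ (2 * n + 2) := Nat.one_le_pow _ _ (by omega)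
  have hATz : (aH : ℤ) + (tH : ℤ) = (NN : ℤ) := by exact_mod_cast hAT
  zify [hq1, hpw0, hpw1, hpw2] at hN hsum1 hsum2
  rw [← hATz] at hN
  rw [hp2n2] at hN
  rw [hp2n1] at hsum1
  rw [hp2n1, hp2n] at hsum2
  rw [hH2e, h1eq] at hsum1 hsum2
  rw [hs''] at hN hsum1 hsum2
  have key : ((k : ℤ) - s * ((q : ℤ) * (((q : ℤ) - 1) * s + 1) + 1)) *
      ((s * (((q : ℤ) - 1) * s + 2)) * (k : ℤ)
        - ((((q : ℤ) - 1) * s + 2) * (((q : ℤ) * s + 1) *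
            (s * (((q : ℤ) - 1) * s + 2) - (((q : ℤ) - 1) * s + 1))))) = 0 := by
    apply mul_left_cancel₀ hd0
    rw [mul_zero]
    linear_combination (2 * (s * (((q : ℤ) - 1) * s + 2)) - (((q : ℤ) - 1) * s + 1)) * hsum1
      - hsum2 - (s * (((q : ℤ) - 1) * s + 2)) *
        ((s * (((q : ℤ) - 1) * s + 2)) - (((q : ℤ) - 1) * s + 1)) * hN
  have hkexp : (k : ℤ) = s * ((q : ℤ) * (((q : ℤ) - 1) * s + 1) + 1) := by
    rcases mul_eq_zero.mp key with h | h
    · linarith [sub_eq_zero.mp h]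
    · exfalso
      have hsk : s * (k : ℤ) = ((q : ℤ) * s + 1) *
          (s * (((q : ℤ) - 1) * s + 2) - (((q : ℤ) - 1) * s + 1)) := by
        have hmul : (0 : ℤ) < ((q : ℤ) - 1) * s := mul_pos (by omega) (by omega)
        have hu1 : (0 : ℤ) < ((q : ℤ) - 1) * s + 2 := by omega
        have hfac : ((((q : ℤ) - 1) * s + 2)) * (s * (k : ℤ)
            - ((q : ℤ) * s + 1) * (s * (((q : ℤ) - 1) * s + 2) - (((q : ℤ) - 1) * s + 1)))
            = 0 := by linear_combination h
        rcases mul_eq_zero.mp hfac with h2 | h2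
        · omega
        · linarith [sub_eq_zero.mp h2]
      have hPE : ((q : ℤ) * s + 1) *
          (s * (((q : ℤ) - 1) * s + 2) - (((q : ℤ) - 1) * s + 1)) + 1
          = s * ((q : ℤ) * ((q : ℤ) - 1) * s * s + (4 * (q : ℤ) - (q : ℤ) * (q : ℤ) - 1) * s
              + (3 - 2 * (q : ℤ))) := by ring
      have hdvd1 : s ∣ (1 : ℤ) := by
        refine ⟨((q : ℤ) * ((q : ℤ) - 1) * s * s + (4 * (q : ℤ) - (q : ℤ) * (q : ℤ) - 1) * s
          + (3 - 2 * (q : ℤ))) - (k : ℤ), ?_⟩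
        linear_combination hPE + hsk
      have := Int.le_of_dvd one_pos hdvd1
      omega
  have hToq : (tH : ℤ) = s * ((q : ℤ) * (((q : ℤ) - 1) * s + 1) + 1) := by
    have hstep : (((q : ℤ) - 1) * ((((q : ℤ) - 1) * s + 1) * (tH : ℤ)))
        = (((q : ℤ) - 1) * ((((q : ℤ) - 1) * s + 1) *
            (s * ((q : ℤ) * (((q : ℤ) - 1) * s + 1) + 1)))) := by
      linear_combination (s * (((q : ℤ) - 1) * s + 2)) * hN - hsum1
        - ((((q : ℤ) - 1) * s + 1) * (((q : ℤ) - 1) * s + 1) * (q : ℤ) - 1) * hkexp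
    have h1 := mul_left_cancel₀ hd0 hstep
    have hmul : (0 : ℤ) < ((q : ℤ) - 1) * s := mul_pos (by omega) (by omega)
    have hu0 : (((q : ℤ) - 1) * s + 1) ≠ 0 := by omega
    exact mul_left_cancel₀ hu0 h1
  have hrhs : ((q : ℤ) ^ n - 1) * ((q : ℤ) ^ (n + 1) + 1) / ((q : ℤ) - 1)
      = s * ((q : ℤ) * (((q : ℤ) - 1) * s + 1) + 1) := by
    have hZn : (q : ℤ) ^ n = ((q : ℤ) - 1) * s + 1 := by rw [hun, hs'']
    have hZn1 : (q : ℤ) ^ (n + 1) = (q : ℤ) * (((q : ℤ) - 1) * s + 1) := by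
      rw [pow_succ, hZn]; ring
    have hnum : ((q : ℤ) ^ n - 1) * ((q : ℤ) ^ (n + 1) + 1)
        = (s * ((q : ℤ) * (((q : ℤ) - 1) * s + 1) + 1)) * ((q : ℤ) - 1) := by
      rw [hZn, hZn1]; ring
    rw [hnum, Int.mul_ediv_cancel _ hd0]
  rw [hrhs]
  exact ⟨hkexp, hToq⟩

end Arith

theorem stmt_12
    (q n : ℕ) (hq : 2 < q) (hn : 2 ≤ n)
    (F : Type*) [Field F] [Fintype F] (hF : Fintype.card F = q)
    (K : Set (Submodule F (Fin (2 * n + 2) → F)))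
    (hK : ∀ P ∈ K, Module.finrank F P = 1)
    (H₁ H₂ C₁ C₂ C₃ C₄ : ℕ)
    (hH₁ : (H₁ : ℤ) = ((q : ℤ) ^ (2 * n) - 1) / ((q : ℤ) - 1))
    (hH₂ : (H₂ : ℤ) = 1 + (q : ℤ) * (((q : ℤ) ^ n + 1) * ((q : ℤ) ^ (n - 1) - 1)) / ((q : ℤ) - 1))
    (hC₁ : (C₁ : ℤ) = ((q : ℤ) ^ n - 1) * ((q : ℤ) ^ (n - 1) + 1) / ((q : ℤ) - 1))
    (hC₂ : (C₂ : ℤ) = 1 + (q : ℤ) * ((q : ℤ) ^ (2 * n - 2) - 1) / ((q : ℤ) - 1))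
    (hC₃ : (C₃ : ℤ) = ((q : ℤ) ^ n + 1) * ((q : ℤ) ^ (n - 1) - 1) / ((q : ℤ) - 1))
    (hC₄ : (C₄ : ℤ) = 1 + (q : ℤ) + (q : ℤ) ^ 2 * (((q : ℤ) ^ (n - 1) + 1) * ((q : ℤ) ^ (n - 2) - 1)) / ((q : ℤ) - 1))
    (hhyp : ∀ W : Submodule F (Fin (2 * n + 2) → F), Module.finrank F W = 2 * n + 1 →
      {P | P ∈ K ∧ P ≤ W}.ncard = H₁ ∨ {P | P ∈ K ∧ P ≤ W}.ncard = H₂)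
    (hcod2 : ∀ W : Submodule F (Fin (2 * n + 2) → F), Module.finrank F W = 2 * n →
      {P | P ∈ K ∧ P ≤ W}.ncard = C₁ ∨ {P | P ∈ K ∧ P ≤ W}.ncard = C₂ ∨
      {P | P ∈ K ∧ P ≤ W}.ncard = C₃ ∨ {P | P ∈ K ∧ P ≤ W}.ncard = C₄)
    :
    (K.ncard : ℤ) = ((q : ℤ) ^ n - 1) * ((q : ℤ) ^ (n + 1) + 1) / ((q : ℤ) - 1) ∧
    (({W : Submodule F (Fin (2 * n + 2) → F) | Module.finrank F W = 2 * n + 1 ∧ {P | P ∈ K ∧ P ≤ W}.ncard = H₂}.ncard : ℤ)) = ((q : ℤ) ^ n - 1) * ((q : ℤ) ^ (n + 1) + 1) / ((q : ℤ) - 1) := by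
  classical
  haveI : Finite (Submodule F (Fin (2 * n + 2) → F)) :=
    Finite.of_injective (fun W => (W : Set (Fin (2 * n + 2) → F))) SetLike.coe_injective
  haveI : Fintype (Submodule F (Fin (2 * n + 2) → F)) := Fintype.ofFinite _
  have hfr : Module.finrank F (Fin (2 * n + 2) → F) = 2 * n + 2 := Module.finrank_fin_fun F
  have hKfin : K.Finite := Set.toFinite K
  set KF : Finset (Submodule F (Fin (2 * n + 2) → F)) := hKfin.toFinset with hKF
  set Hs : Finset (Submodule F (Fin (2 * n + 2) → F)) :=
    univ.filter (fun W => Module.finrank F W = 2 * n + 1) with hHs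
  set c : Submodule F (Fin (2 * n + 2) → F) → ℕ :=
    fun W => (KF.filter (fun P => P ≤ W)).card with hcdef
  have hc : ∀ W, {P | P ∈ K ∧ P ≤ W}.ncard = c W := by
    intro W
    have h : {P | P ∈ K ∧ P ≤ W} = ↑(KF.filter (fun P => P ≤ W)) := by
      ext P
      simp only [Set.mem_setOf_eq, Finset.coe_filter, Finset.mem_filter, hKF,
        Set.Finite.mem_toFinset]
    rw [h, Set.ncard_coe_finset]
  set k := KF.card with hk
  have hkK : K.ncard = k := by rw [hk, hKF, Set.ncard_eq_toFinset_card]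
  -- counting hyperplanes above a subspace
  have hyp_count : ∀ U : Submodule F (Fin (2 * n + 2) → F),
      (q - 1) * (Hs.filter (fun W => U ≤ W)).card
        = q ^ (2 * n + 2 - Module.finrank F U) - 1 := by
    intro U
    have h0 : (0 : ℕ) < Module.finrank F (Fin (2 * n + 2) → F) := by rw [hfr]; omega
    have h := card_hyperplanes_above (F := F) h0 U
    rw [hF, hfr] at h
    have hset : {W : Submodule F (Fin (2 * n + 2) → F) |
        Module.finrank F W = 2 * n + 2 - 1 ∧ U ≤ W} = ↑(Hs.filter (fun W => U ≤ W)) := by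
      ext W
      simp only [Set.mem_setOf_eq, hHs, Finset.coe_filter, Finset.mem_filter, mem_univ, true_and]
      constructor
      · rintro ⟨h1, h2⟩; exact ⟨by omega, h2⟩
      · rintro ⟨h1, h2⟩; exact ⟨by omega, h2⟩
    rw [hset, Set.ncard_coe_finset] at h
    exact h
  -- total number of hyperplanes
  have hN : (q - 1) * Hs.card = q ^ (2 * n + 2) - 1 := by
    have h := hyp_count ⊥
    rw [finrank_bot, Nat.sub_zero] at h
    rwa [Finset.filter_true_of_mem (fun W _ => bot_le)] at h
  -- hyperplanes through one point of K
  have hpt : ∀ P ∈ KF, (q - 1) * (Hs.filter (fun W => P ≤ W)).card = q ^ (2 * n + 1) - 1 := by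
    intro P hP
    have hPK : P ∈ K := by rwa [hKF, Set.Finite.mem_toFinset] at hP
    have h := hyp_count P
    rw [hK P hPK] at h
    have he : 2 * n + 2 - 1 = 2 * n + 1 := by omega
    rwa [he] at h
  -- hyperplanes through two distinct points of K
  have hpair : ∀ P ∈ KF, ∀ P' ∈ KF, P ≠ P' →
      (q - 1) * (Hs.filter (fun W => P ≤ W ∧ P' ≤ W)).card = q ^ (2 * n) - 1 := by
    intro P hP P' hP' hne
    have hPK : P ∈ K := by rwa [hKF, Set.Finite.mem_toFinset] at hP
    have hP'K : P' ∈ K := by rwa [hKF, Set.Finite.mem_toFinset] at hP'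
    have hsup : Module.finrank F (P ⊔ P' : Submodule F (Fin (2 * n + 2) → F)) = 2 := by
      have hint : Module.finrank F (P ⊓ P' : Submodule F (Fin (2 * n + 2) → F)) = 0 := by
        by_contra h0
        have hle : (P ⊓ P' : Submodule F _) ≤ P := inf_le_left
        have h1 : Module.finrank F (P ⊓ P' : Submodule F _) ≤ 1 := by
          rw [← hK P hPK]
          exact Submodule.finrank_mono hle
        have h2 : Module.finrank F (P ⊓ P' : Submodule F _) = 1 := by omega
        have heq1 : (P ⊓ P' : Submodule F _) = P :=
          Submodule.eq_of_le_of_finrank_le hle (by rw [hK P hPK, h2])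
        have heq2 : (P ⊓ P' : Submodule F _) = P' :=
          Submodule.eq_of_le_of_finrank_le inf_le_right (by rw [hK P' hP'K, h2])
        exact hne (heq1 ▸ heq2)
      have hsi := Submodule.finrank_sup_add_finrank_inf_eq P P'
      rw [hK P hPK, hK P' hP'K, hint] at hsi
      omega
    have h := hyp_count (P ⊔ P')
    rw [hsup] at h
    have he : 2 * n + 2 - 2 = 2 * n := by omega
    rw [he] at h
    have hfe : (Hs.filter (fun W => P ≤ W ∧ P' ≤ W))
        = (Hs.filter (fun W => P ⊔ P' ≤ W)) :=
      Finset.filter_congr (fun W _ => by simp [sup_le_iff])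
    rw [hfe]
    exact h
  -- first moment
  have hsum1 : (q - 1) * (∑ W ∈ Hs, c W) = k * (q ^ (2 * n + 1) - 1) := by
    have e1 : ∑ W ∈ Hs, c W = ∑ P ∈ KF, (Hs.filter (fun W => P ≤ W)).card := by
      simp only [hcdef, Finset.card_filter]
      exact Finset.sum_comm
    rw [e1, Finset.mul_sum, Finset.sum_congr rfl (fun P hP => hpt P hP),
      Finset.sum_const, smul_eq_mul]
  -- second moment
  have hsum2 : (q - 1) * (∑ W ∈ Hs, c W * c W) + k * (q ^ (2 * n) - 1)
      = k * (q ^ (2 * n + 1) - 1) + k * k * (q ^ (2 * n) - 1) := by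
    have e2 : ∑ W ∈ Hs, c W * c W
        = ∑ P ∈ KF, ∑ P' ∈ KF, (Hs.filter (fun W => P ≤ W ∧ P' ≤ W)).card := by
      have step : ∀ W, c W * c W = ∑ P ∈ KF, ∑ P' ∈ KF,
          (if P ≤ W ∧ P' ≤ W then 1 else 0) := by
        intro W
        simp only [hcdef, Finset.card_filter]
        rw [Finset.sum_mul_sum]
        apply Finset.sum_congr rfl
        intro P _
        apply Finset.sum_congr rfl
        intro P' _
        by_cases h1 : P ≤ W <;> by_cases h2 : P' ≤ W <;> simp [h1, h2]
      calc ∑ W ∈ Hs, c W * c W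
          = ∑ W ∈ Hs, ∑ P ∈ KF, ∑ P' ∈ KF, (if P ≤ W ∧ P' ≤ W then 1 else 0) :=
            Finset.sum_congr rfl (fun W _ => step W)
        _ = ∑ P ∈ KF, ∑ W ∈ Hs, ∑ P' ∈ KF, (if P ≤ W ∧ P' ≤ W then 1 else 0) :=
            Finset.sum_comm
        _ = ∑ P ∈ KF, ∑ P' ∈ KF, ∑ W ∈ Hs, (if P ≤ W ∧ P' ≤ W then 1 else 0) :=
            Finset.sum_congr rfl (fun P _ => Finset.sum_comm)
        _ = ∑ P ∈ KF, ∑ P' ∈ KF, (Hs.filter (fun W => P ≤ W ∧ P' ≤ W)).card :=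
            Finset.sum_congr rfl (fun P _ => Finset.sum_congr rfl
              (fun P' _ => (Finset.card_filter _ _).symm))
    have e3 : ∀ P ∈ KF, (q - 1) * (∑ P' ∈ KF, (Hs.filter (fun W => P ≤ W ∧ P' ≤ W)).card)
        = (q ^ (2 * n + 1) - 1) + (k - 1) * (q ^ (2 * n) - 1) := by
      intro P hP
      rw [← Finset.add_sum_erase _ _ hP, Nat.mul_add]
      congr 1
      · rw [show (Hs.filter (fun W => P ≤ W ∧ P ≤ W)) = Hs.filter (fun W => P ≤ W) from
          Finset.filter_congr (fun W _ => by simp), hpt P hP]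
      · rw [Finset.mul_sum, Finset.sum_congr rfl
          (fun P' hP' => hpair P hP P' (Finset.mem_of_mem_erase hP')
            (Ne.symm (Finset.ne_of_mem_erase hP'))),
          Finset.sum_const, smul_eq_mul, Finset.card_erase_of_mem hP, ← hk]
    have e4 : (q - 1) * (∑ W ∈ Hs, c W * c W)
        = k * ((q ^ (2 * n + 1) - 1) + (k - 1) * (q ^ (2 * n) - 1)) := by
      rw [e2, Finset.mul_sum, Finset.sum_congr rfl e3, Finset.sum_const, smul_eq_mul]
    rw [e4]
    cases k with
    | zero => simp
    | succ m =>
      simp only [Nat.succ_sub_one]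
      ring
  -- split hyperplanes into tangent / nontangent
  have hne12 : H₁ ≠ H₂ := elliptic_ne q n hq hn H₁ H₂ hH₁ hH₂
  have hflip : Hs.filter (fun W => ¬ c W = H₁) = Hs.filter (fun W => c W = H₂) := by
    apply Finset.filter_congr
    intro W hW
    have hWr : Module.finrank F W = 2 * n + 1 := by
      rw [hHs] at hW
      exact (Finset.mem_filter.mp hW).2
    have hor := hhyp W hWr
    rw [hc W] at hor
    rcases hor with h | h
    · simp [h, hne12]
    · simp only [h, iff_true]
      exact fun hcon => hne12 hcon.symm
  set tH := (Hs.filter (fun W => c W = H₂)).card with htH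
  set aH := (Hs.filter (fun W => c W = H₁)).card with haH
  have hAT : aH + tH = Hs.card := by
    rw [haH, htH, ← hflip]
    exact Finset.card_filter_add_card_filter_not _
  have hsplit1 : ∑ W ∈ Hs, c W = aH * H₁ + tH * H₂ := by
    rw [← Finset.sum_filter_add_sum_filter_not Hs (fun W => c W = H₁), hflip]
    congr 1
    · rw [Finset.sum_congr rfl (fun W hW => (Finset.mem_filter.mp hW).2),
        Finset.sum_const, smul_eq_mul]
    · rw [Finset.sum_congr rfl (fun W hW => (Finset.mem_filter.mp hW).2),
        Finset.sum_const, smul_eq_mul]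
  have hsplit2 : ∑ W ∈ Hs, c W * c W = aH * (H₁ * H₁) + tH * (H₂ * H₂) := by
    rw [← Finset.sum_filter_add_sum_filter_not Hs (fun W => c W = H₁), hflip]
    congr 1
    · rw [Finset.sum_congr rfl
        (fun W hW => by rw [(Finset.mem_filter.mp hW).2]), Finset.sum_const, smul_eq_mul]
    · rw [Finset.sum_congr rfl
        (fun W hW => by rw [(Finset.mem_filter.mp hW).2]), Finset.sum_const, smul_eq_mul]
  rw [hsplit1] at hsum1
  rw [hsplit2] at hsum2
  obtain ⟨hk1, ht1⟩ := elliptic_arith q n hq hn H₁ H₂ k aH tH Hs.card hH₁ hH₂ hAT hN hsum1 hsum2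
  constructor
  · rw [hkK]
    exact hk1
  · have hset2 : {W : Submodule F (Fin (2 * n + 2) → F) |
        Module.finrank F W = 2 * n + 1 ∧ {P | P ∈ K ∧ P ≤ W}.ncard = H₂}
        = ↑(Hs.filter (fun W => c W = H₂)) := by
      ext W
      simp [hHs, hc W]
    rw [hset2, Set.ncard_coe_finset, ← htH]
    exact ht1
end
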